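/- arXiv:1503.01277 — 7 statements merged into one kernel-verified Lean document; each statement's English description precedes it below -/
import Mathlib

section
/- Let 0 < ε < ω, let K ∈ L¹([−ε,ε]) with ‖K‖_{L¹} = 1, let a ∈ [0,1], let ρ = β + iγ with 0 ≤ β ≤ 1 and γ ∈ ℝ \ {0}, and let k ≥ 1 be an integer. Set Φ_{ω,ρ,a} = ∫_{ω−ε}^{ω+ε} K(y−ω)·y·e^{(1/2−a)y}·Eit((a−ρ)y) dy and, for j ≥ 1, F_{ω,ρ}^{(−j)}(0) = (−1)^j ∫_{ω−ε}^{ω+ε} y^{1−j} K(y−ω) e^{(1/2−ρ)y} dy. Then | Φ_{ω,ρ,a} − ∑_{j=1}^k (j−1)!·F_{ω,ρ}^{(−j)}(0)/(ρ−a)^j | ≤ k!·e^{ε/2}·e^{(1/2−β)ω} / ( (ω−ε)^k · |γ|^{k+1} ). -/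
/-!
Put `J_m(z) = ∫₀^∞ e^{z-t} / (z-t)^m dt`, so that `Eit = J_1`. Integration by parts gives
`J_m(z) = e^z / z^m + m J_{m+1}(z)`, hence `Eit z = ∑_{j=1}^k (j-1)! e^z / z^j + k! J_{k+1}(z)`,
and `|J_{k+1}(z)| ≤ e^{Re z} / |Im z|^{k+1}` since `|z - t| ≥ |Im z|`. With `z = (a-ρ)y` the main
terms integrate to the `F^{(-j)}(0)` terms, while the remainder is bounded by
`|K(y-ω)| k! e^{(1/2-β)y} / (y^k |γ|^{k+1})`; on `|y - ω| ≤ ε` we have `y ≥ ω - ε` and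
`(1/2-β)(y-ω) ≤ ε/2`, and `‖K‖₁ = 1` finishes the estimate.
-/

open scoped BigOperators

noncomputable def Eit (z : ℂ) : ℂ :=
  ∫ t in Set.Ioi (0 : ℝ), Complex.exp (z - t) / (z - t)

open MeasureTheory Set Filter Complex Topology

noncomputable def expDivPowIntegral (m : ℕ) (z : ℂ) : ℂ :=
  ∫ t in Ioi (0 : ℝ), exp (z - t) / (z - t) ^ m

theorem Eit_eq_expDivPowIntegral_one (z : ℂ) : Eit z = expDivPowIntegral 1 z := by
  simp only [Eit, expDivPowIntegral, pow_one]

section ExpDivPow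

variable {z : ℂ}

theorem sub_ofReal_ne_zero_of_im_ne_zero (hz : z.im ≠ 0) (t : ℝ) : z - t ≠ 0 := fun h =>
  hz (by simpa using congrArg im h)

theorem norm_exp_sub_div_pow_le (hz : z.im ≠ 0) (m : ℕ) (t : ℝ) :
    ‖exp (z - t) / (z - t) ^ m‖ ≤ Real.exp (z.re - t) / |z.im| ^ m := by
  rw [norm_div, norm_exp, norm_pow, sub_re, ofReal_re]
  have him : |z.im| ≤ ‖z - t‖ := by simpa using abs_im_le_norm (z - t)
  gcongr

theorem integrableOn_exp_sub_div_pow (hz : z.im ≠ 0) (m : ℕ) :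
    IntegrableOn (fun t : ℝ => exp (z - t) / (z - t) ^ m) (Ioi 0) := by
  have hcont : Continuous (fun t : ℝ => exp (z - t) / (z - t) ^ m) := by
    refine Continuous.div (by fun_prop) (by fun_prop) fun t => ?_
    exact pow_ne_zero _ (sub_ofReal_ne_zero_of_im_ne_zero hz t)
  refine Integrable.mono' ((exp_neg_integrableOn_Ioi 0 one_pos).const_mul
    (Real.exp z.re / |z.im| ^ m)) hcont.aestronglyMeasurable.restrict
    (Eventually.of_forall fun t => (norm_exp_sub_div_pow_le hz m t).trans_eq ?_)
  rw [sub_eq_add_neg, Real.exp_add]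
  ring_nf

theorem hasDerivAt_exp_sub_div_pow (hz : z.im ≠ 0) (m : ℕ) (t : ℝ) :
    HasDerivAt (fun t : ℝ => exp (z - t) / (z - t) ^ m)
      (m * (exp (z - t) / (z - t) ^ (m + 1)) - exp (z - t) / (z - t) ^ m) t := by
  have hne := sub_ofReal_ne_zero_of_im_ne_zero hz t
  have hsub : HasDerivAt (fun t : ℝ => z - t) (-1) t := by
    simpa using (hasDerivAt_id (t : ℂ)).comp_ofReal.const_sub z
  refine (hsub.cexp.fun_div (hsub.fun_pow m) (pow_ne_zero m hne)).congr_deriv ?_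
  rcases m with _ | m
  · simp
  · rw [Nat.add_sub_cancel]
    field_simp
    push_cast
    ring

theorem tendsto_exp_sub_div_pow_atTop (hz : z.im ≠ 0) (m : ℕ) :
    Tendsto (fun t : ℝ => exp (z - t) / (z - t) ^ m) atTop (𝓝 0) := by
  refine squeeze_zero_norm (norm_exp_sub_div_pow_le hz m) ?_
  have h : Tendsto (fun t : ℝ => Real.exp (z.re - t)) atTop (𝓝 0) :=
    Real.tendsto_exp_atBot.comp (tendsto_atBot_add_const_left _ _ tendsto_neg_atTop_atBot)
  simpa using h.div_const (|z.im| ^ m)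

theorem expDivPowIntegral_eq_add_mul_succ (hz : z.im ≠ 0) (m : ℕ) :
    expDivPowIntegral m z = exp z / z ^ m + m * expDivPowIntegral (m + 1) z := by
  have h := integral_Ioi_of_hasDerivAt_of_tendsto' (fun t _ => hasDerivAt_exp_sub_div_pow hz m t)
    (((integrableOn_exp_sub_div_pow hz (m + 1)).const_mul _).sub
      (integrableOn_exp_sub_div_pow hz m)) (tendsto_exp_sub_div_pow_atTop hz m)
  rw [integral_sub ((integrableOn_exp_sub_div_pow hz (m + 1)).const_mul _)
    (integrableOn_exp_sub_div_pow hz m), integral_const_mul] at h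
  simp only [ofReal_zero, sub_zero] at h
  rw [expDivPowIntegral, expDivPowIntegral]
  linear_combination -h

theorem norm_expDivPowIntegral_le (hz : z.im ≠ 0) (m : ℕ) :
    ‖expDivPowIntegral m z‖ ≤ Real.exp z.re / |z.im| ^ m := by
  have hexp : (fun t : ℝ => Real.exp (z.re - t) / |z.im| ^ m) =
      fun t => Real.exp z.re / |z.im| ^ m * Real.exp (-t) := by
    ext t
    rw [sub_eq_add_neg, Real.exp_add]
    ring
  calc ‖expDivPowIntegral m z‖
      ≤ ∫ t in Ioi (0 : ℝ), Real.exp (z.re - t) / |z.im| ^ m :=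
        norm_integral_le_of_norm_le (by simpa [hexp] using
          (exp_neg_integrableOn_Ioi 0 one_pos).const_mul (Real.exp z.re / |z.im| ^ m))
          (Eventually.of_forall (norm_exp_sub_div_pow_le hz m))
    _ = Real.exp z.re / |z.im| ^ m := by
        rw [hexp, integral_const_mul, integral_exp_neg_Ioi_zero, mul_one]

theorem Eit_eq_sum_add (hz : z.im ≠ 0) (k : ℕ) :
    Eit z = ∑ j ∈ Finset.Icc 1 k, ((j - 1).factorial : ℂ) * (exp z / z ^ j)
      + k.factorial * expDivPowIntegral (k + 1) z := by
  induction k with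
  | zero => simp [Eit_eq_expDivPowIntegral_one]
  | succ k ih =>
    rw [ih, expDivPowIntegral_eq_add_mul_succ hz (k + 1), Finset.sum_Icc_succ_top (by omega),
      Nat.add_sub_cancel, Nat.factorial_succ]
    push_cast
    ring

@[fun_prop]
theorem measurable_expDivPowIntegral (m : ℕ) : Measurable (expDivPowIntegral m) :=
  (StronglyMeasurable.integral_prod_right (by fun_prop)).measurable

end ExpDivPow

noncomputable def phiRemainder (a : ℝ) (ρ : ℂ) (k : ℕ) (y : ℝ) : ℂ :=
  (y * Real.exp ((1 / 2 - a) * y) : ℝ) * (k.factorial * expDivPowIntegral (k + 1) ((a - ρ) * y))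

section Phi

variable {u v a : ℝ} {ρ : ℂ}

theorem ofReal_mul_exp_div_pow_eq (Ly : ℝ) {y : ℝ} (hy : y ≠ 0) (j : ℕ) :
    ((Ly * y * Real.exp ((1 / 2 - a) * y) : ℝ) : ℂ) *
        ((j - 1).factorial * (exp ((a - ρ) * y) / ((a - ρ) * y) ^ j))
      = (j - 1).factorial * (-1) ^ j / (ρ - a) ^ j *
        ((y : ℂ) ^ ((1 : ℤ) - j) * (Ly : ℂ) * exp ((1 / 2 - ρ) * y)) := by
  have hexp : exp (((1 / 2 - a) * y : ℝ) : ℂ) * exp ((a - ρ) * y) = exp ((1 / 2 - ρ) * y) := by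
    rw [← exp_add]
    push_cast
    ring_nf
  have hpow : (y : ℂ) ^ ((1 : ℤ) - j) = y / y ^ j := by
    rw [zpow_sub₀ (ofReal_ne_zero.2 hy), zpow_one, zpow_natCast]
  have hsign : (-1 : ℂ) ^ j / (ρ - a) ^ j = 1 / (a - ρ) ^ j := by
    rw [← div_pow, ← one_div_pow, ← neg_sub (a : ℂ), div_neg, neg_div, neg_neg]
  rw [← hexp, hpow, mul_div_assoc _ ((-1 : ℂ) ^ j), hsign, mul_pow]
  push_cast
  ring

theorem norm_phiRemainder_le (hγ : ρ.im ≠ 0) (k : ℕ) (hu : 0 < u) {y : ℝ} (hy : u ≤ y) :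
    ‖phiRemainder a ρ k y‖
      ≤ k.factorial / (u ^ k * |ρ.im| ^ (k + 1)) * Real.exp ((1 / 2 - ρ.re) * y) := by
  have hy0 : 0 < y := hu.trans_le hy
  have him : ((a - ρ) * (y : ℂ)).im ≠ 0 := by simpa using And.intro hγ hy0.ne'
  have hJ := norm_expDivPowIntegral_le him (k + 1)
  have hre : ((a - ρ) * (y : ℂ)).re = (a - ρ.re) * y := by simp
  have habs : |((a - ρ) * (y : ℂ)).im| = |ρ.im| * y := by simp [abs_mul, abs_of_pos hy0]
  rw [hre, habs] at hJ
  rw [phiRemainder, norm_mul, norm_mul, norm_real, Real.norm_of_nonneg (by positivity),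
    norm_natCast]
  calc y * Real.exp ((1 / 2 - a) * y) * (k.factorial * ‖expDivPowIntegral (k + 1) ((a - ρ) * y)‖)
      ≤ y * Real.exp ((1 / 2 - a) * y) * (k.factorial *
          (Real.exp ((a - ρ.re) * y) / (|ρ.im| * y) ^ (k + 1))) := by gcongr
    _ = k.factorial / (y ^ k * |ρ.im| ^ (k + 1)) * Real.exp ((1 / 2 - ρ.re) * y) := by
        rw [show (1 / 2 - ρ.re) * y = (1 / 2 - a) * y + (a - ρ.re) * y by ring, Real.exp_add]
        field_simp
        ring
    _ ≤ k.factorial / (u ^ k * |ρ.im| ^ (k + 1)) * Real.exp ((1 / 2 - ρ.re) * y) := by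
        gcongr

theorem measurable_phiRemainder (a : ℝ) (ρ : ℂ) (k : ℕ) : Measurable (phiRemainder a ρ k) := by
  unfold phiRemainder
  fun_prop

variable {L : ℝ → ℝ}

theorem intervalIntegrable_ofReal_mul_phiRemainder (hγ : ρ.im ≠ 0) (k : ℕ) (hu : 0 < u)
    (huv : u ≤ v) (hL : IntervalIntegrable L volume u v) :
    IntervalIntegrable (fun y => (L y : ℂ) * phiRemainder a ρ k y) volume u v := by
  refine (hL.abs.mul_continuousOn (g := fun y =>
    k.factorial / (u ^ k * |ρ.im| ^ (k + 1)) * Real.exp ((1 / 2 - ρ.re) * y))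
      (by fun_prop)).mono_fun' ?_ ?_
  · exact ((Complex.measurable_ofReal.comp_aemeasurable hL.def'.aemeasurable).mul
      (measurable_phiRemainder a ρ k).aemeasurable).aestronglyMeasurable
  · rw [uIoc_of_le huv, EventuallyLE, ae_restrict_iff' measurableSet_Ioc]
    refine Eventually.of_forall fun y hy => ?_
    rw [norm_mul, norm_real, Real.norm_eq_abs]
    exact mul_le_mul_of_nonneg_left (norm_phiRemainder_le hγ k hu hy.1.le) (abs_nonneg _)

theorem norm_integral_ofReal_mul_phiRemainder_le (hγ : ρ.im ≠ 0) (k : ℕ) (hu : 0 < u)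
    (huv : u ≤ v) (hL : IntervalIntegrable L volume u v) :
    ‖∫ y in u..v, (L y : ℂ) * phiRemainder a ρ k y‖
      ≤ k.factorial / (u ^ k * |ρ.im| ^ (k + 1)) *
          ∫ y in u..v, |L y| * Real.exp ((1 / 2 - ρ.re) * y) := by
  rw [← intervalIntegral.integral_const_mul]
  refine intervalIntegral.norm_integral_le_of_norm_le huv
    (Eventually.of_forall fun y hy => ?_) ((hL.abs.mul_continuousOn (by fun_prop)).const_mul _)
  rw [norm_mul, norm_real, Real.norm_eq_abs, mul_left_comm]
  exact mul_le_mul_of_nonneg_left (norm_phiRemainder_le hγ k hu hy.1.le) (abs_nonneg _)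

theorem integral_sub_sum_eq_integral_phiRemainder (hγ : ρ.im ≠ 0) (k : ℕ) (hu : 0 < u)
    (huv : u ≤ v) (hL : IntervalIntegrable L volume u v) :
    (∫ y in u..v, ((L y * y * Real.exp ((1 / 2 - a) * y) : ℝ) : ℂ) * Eit ((a - ρ) * y))
        - ∑ j ∈ Finset.Icc 1 k, ((j - 1).factorial * ((-1) ^ j *
            (∫ y in u..v, (y : ℂ) ^ ((1 : ℤ) - j) * (L y : ℂ) * exp ((1 / 2 - ρ) * y)))
              / (ρ - a) ^ j)
      = ∫ y in u..v, (L y : ℂ) * phiRemainder a ρ k y := by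
  have hLc : IntervalIntegrable (fun y => (L y : ℂ)) volume u v := ⟨hL.1.ofReal, hL.2.ofReal⟩
  have hpos : ∀ y ∈ uIcc u v, 0 < y := fun y hy => hu.trans_le (uIcc_of_le huv ▸ hy).1
  have hterm (j : ℕ) : IntervalIntegrable
      (fun y : ℝ => (y : ℂ) ^ ((1 : ℤ) - j) * (L y : ℂ) * exp ((1 / 2 - ρ) * y)) volume u v :=
    (hLc.continuousOn_mul (ContinuousOn.zpow₀ (by fun_prop) _ fun y hy =>
      Or.inl (ofReal_ne_zero.2 (hpos y hy).ne'))).mul_continuousOn (by fun_prop)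
  have hsplit : EqOn (fun y : ℝ => ((L y * y * Real.exp ((1 / 2 - a) * y) : ℝ) : ℂ) *
        Eit ((a - ρ) * y))
      (fun y => ∑ j ∈ Finset.Icc 1 k, (j - 1).factorial * (-1) ^ j / (ρ - a) ^ j *
        ((y : ℂ) ^ ((1 : ℤ) - j) * (L y : ℂ) * exp ((1 / 2 - ρ) * y))
          + (L y : ℂ) * phiRemainder a ρ k y) (uIcc u v) := by
    intro y hy
    have him : ((a - ρ) * (y : ℂ)).im ≠ 0 := by simpa using And.intro hγ (hpos y hy).ne'
    simp only [Eit_eq_sum_add him k, mul_add, Finset.mul_sum,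
      ofReal_mul_exp_div_pow_eq _ (hpos y hy).ne', phiRemainder]
    push_cast
    ring
  have hsum := IntervalIntegrable.sum (Finset.Icc 1 k) fun j _ => (hterm j).const_mul
    ((j - 1).factorial * (-1) ^ j / (ρ - a) ^ j)
  rw [Finset.sum_fn] at hsum
  rw [intervalIntegral.integral_congr hsplit, intervalIntegral.integral_add hsum
      (intervalIntegrable_ofReal_mul_phiRemainder hγ k hu huv hL),
    intervalIntegral.integral_finsetSum fun j _ => (hterm j).const_mul _]
  simp only [intervalIntegral.integral_const_mul]
  rw [add_sub_right_comm, ← Finset.sum_sub_distrib, Finset.sum_eq_zero fun j _ => by ring,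
    zero_add]

end Phi

theorem exp_half_sub_mul_le_of_abs_sub_le {β ε ω y : ℝ} (hβ : β ∈ Icc (0 : ℝ) 1)
    (hy : |y - ω| ≤ ε) :
    Real.exp ((1 / 2 - β) * y) ≤ Real.exp (ε / 2) * Real.exp ((1 / 2 - β) * ω) := by
  rw [← Real.exp_add, Real.exp_le_exp]
  have hβ' : |1 / 2 - β| ≤ 1 / 2 := abs_le.2 ⟨by linarith [hβ.2], by linarith [hβ.1]⟩
  have : (1 / 2 - β) * (y - ω) ≤ 1 / 2 * ε := calc
    _ ≤ |1 / 2 - β| * |y - ω| := (le_abs_self _).trans (abs_mul _ _).le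
    _ ≤ 1 / 2 * ε := mul_le_mul hβ' hy (abs_nonneg _) (by norm_num)
  linarith

theorem Phi_asymptotic_expansion_general
    (ε ω a : ℝ) (K : ℝ → ℝ) (ρ : ℂ) (k : ℕ)
    (hε : 0 < ε) (hεω : ε < ω)
    (hK : MeasureTheory.IntegrableOn K (Set.Icc (-ε) ε))
    (hK1 : (∫ y in Set.Icc (-ε) ε, |K y|) = 1)
    (hβ : ρ.re ∈ Set.Icc (0 : ℝ) 1) (hγ : ρ.im ≠ 0) :
    ‖(∫ y in (ω - ε)..(ω + ε),
          ((K (y - ω) * y * Real.exp ((1/2 - a) * y) : ℝ) : ℂ) *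
            Eit (((a : ℂ) - ρ) * y))
        - ∑ j ∈ Finset.Icc 1 k,
            (((j - 1).factorial : ℂ) *
              ((-1 : ℂ) ^ j * ∫ y in (ω - ε)..(ω + ε),
                (y : ℂ) ^ ((1 : ℤ) - (j : ℤ)) * ((K (y - ω) : ℝ) : ℂ) *
                  Complex.exp ((1/2 - ρ) * y))
              / (ρ - (a : ℂ)) ^ j)‖
      ≤ (k.factorial : ℝ) * Real.exp (ε / 2) * Real.exp ((1/2 - ρ.re) * ω)
          / ((ω - ε) ^ k * |ρ.im| ^ (k + 1)) := by
  have hu : 0 < ω - ε := by linarith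
  have huv : ω - ε ≤ ω + ε := by linarith
  have hL : IntervalIntegrable (fun y => K (y - ω)) volume (ω - ε) (ω + ε) := by
    simpa [sub_eq_neg_add, add_comm] using ((intervalIntegrable_iff_integrableOn_Icc_of_le
      (by linarith)).2 hK).comp_sub_right ω
  have hL1 : ∫ y in (ω - ε)..(ω + ε), |K (y - ω)| = 1 := by
    rw [intervalIntegral.integral_comp_sub_right (fun y => |K y|), sub_sub_cancel_left,
      add_sub_cancel_left, intervalIntegral.integral_of_le (by linarith),
      ← integral_Icc_eq_integral_Ioc, hK1]
  rw [integral_sub_sum_eq_integral_phiRemainder hγ k hu huv hL]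
  calc _ ≤ k.factorial / ((ω - ε) ^ k * |ρ.im| ^ (k + 1)) *
        ∫ y in (ω - ε)..(ω + ε), |K (y - ω)| * Real.exp ((1 / 2 - ρ.re) * y) :=
        norm_integral_ofReal_mul_phiRemainder_le hγ k hu huv hL
    _ ≤ k.factorial / ((ω - ε) ^ k * |ρ.im| ^ (k + 1)) * ∫ y in (ω - ε)..(ω + ε),
          |K (y - ω)| * (Real.exp (ε / 2) * Real.exp ((1 / 2 - ρ.re) * ω)) := by
        gcongr
        refine intervalIntegral.integral_mono_on huv (hL.abs.mul_continuousOn (by fun_prop))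
          (hL.abs.mul_const _) fun y hy => ?_
        exact mul_le_mul_of_nonneg_left (exp_half_sub_mul_le_of_abs_sub_le hβ
          (abs_sub_le_iff.2 ⟨by linarith [hy.2], by linarith [hy.1]⟩)) (abs_nonneg _)
    _ = _ := by
        rw [intervalIntegral.integral_mul_const, hL1]
        ring

theorem Phi_asymptotic_expansion
    (ε ω a : ℝ) (K : ℝ → ℝ) (ρ : ℂ) (k : ℕ)
    (hε : 0 < ε) (hεω : ε < ω)
    (hK : MeasureTheory.IntegrableOn K (Set.Icc (-ε) ε))
    (hK1 : (∫ y in Set.Icc (-ε) ε, |K y|) = 1)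
    (ha : a ∈ Set.Icc (0 : ℝ) 1)
    (hβ : ρ.re ∈ Set.Icc (0 : ℝ) 1) (hγ : ρ.im ≠ 0)
    (hk : 1 ≤ k) :
    ‖(∫ y in (ω - ε)..(ω + ε),
          ((K (y - ω) * y * Real.exp ((1/2 - a) * y) : ℝ) : ℂ) *
            Eit (((a : ℂ) - ρ) * y))
        - ∑ j ∈ Finset.Icc 1 k,
            (((j - 1).factorial : ℂ) *
              ((-1 : ℂ) ^ j * ∫ y in (ω - ε)..(ω + ε),
                (y : ℂ) ^ ((1 : ℤ) - (j : ℤ)) * ((K (y - ω) : ℝ) : ℂ) *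
                  Complex.exp ((1/2 - ρ) * y))
              / (ρ - (a : ℂ)) ^ j)‖
      ≤ (k.factorial : ℝ) * Real.exp (ε / 2) * Real.exp ((1/2 - ρ.re) * ω)
          / ((ω - ε) ^ k * |ρ.im| ^ (k + 1)) :=
  Phi_asymptotic_expansion_general ε ω a K ρ k hε hεω hK hK1 hβ hγ
end

section
/- Let 0 < ε < ω with eε < ω, let K ∈ L¹([−ε,ε]) with ‖K‖_{L¹} = 1, let ρ = β + iγ with 0 ≤ β ≤ 1 and γ ∈ ℝ \ {0}, let j ≥ 2 and m ≥ 0 be integers, and set F_{ω,ρ}^{(−j)}(0) = (−1)^j ∫_{ω−ε}^{ω+ε} y^{1−j} K(y−ω) e^{(1/2−ρ)y} dy. Then | F_{ω,ρ}^{(−j)}(0) − (−1)^j e^{(1/2−ρ)ω} ∑_{n=0}^m C(n+j−2, n)·(−i)^n·K̂^{(n)}(ρ/i − 1/(2i)) / ω^{n+j−1} | ≤ ( e^{j−2+ε/2}·e^{(1/2−β)ω} / ω^{j−1} ) · (eε/ω)^{m+1} / (1 − eε/ω), where C(·,·) denotes the binomial coefficient and K̂^{(n)} is the n-th derivative of the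 entire function K̂(z) = ∫_{−ε}^{ε} K(y) e^{−izy} dy. -/
open scoped BigOperators

/-!
Substituting `y = ω + t` turns the integral into `e^{(1/2-ρ)ω} ∫ K(t) e^{(1/2-ρ)t} (ω+t)^{1-j} dt`.
Expand `(ω+t)^{1-j}` in its negative binomial series in `t/ω`. Against `K(t) e^{(1/2-ρ)t}`, the
`n`-th power `(-it)^n` integrates to `K̂^{(n)}(ρ/i - 1/(2i))` (differentiation under the integral
sign), which produces the finite sum. The tail of the series is dominated termwise via
`C(N, j-2) ≤ 2^N ≤ e^N` by a geometric series in `eε/ω`, while `|e^{(1/2-ρ)t}| ≤ e^{ε/2}` for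
`0 ≤ Re ρ ≤ 1` and `‖K‖₁ = 1`.
-/

section InvPowTaylor

open Real

theorem norm_one_div_one_sub_pow_sub_sum_le {𝕜 : Type*} [NormedDivisionRing 𝕜]
    [HasSummableGeomSeries 𝕜] {x : 𝕜} {r : ℝ} (hx : ‖x‖ ≤ r) (hr : exp 1 * r < 1) (k m : ℕ) :
    ‖1 / (1 - x) ^ (k + 1) - ∑ n ∈ Finset.range (m + 1), ((n + k).choose k : 𝕜) * x ^ n‖
      ≤ exp k * ((exp 1 * r) ^ (m + 1) / (1 - exp 1 * r)) := by
  have hr0 : 0 ≤ r := (norm_nonneg x).trans hx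
  have hx1 : ‖x‖ < 1 :=
    hx.trans_lt (lt_of_le_of_lt (le_mul_of_one_le_left hr0 (one_le_exp zero_le_one)) hr)
  have htail := (hasSum_nat_add_iff' (G := 𝕜) (m + 1)).2
    (hasSum_choose_mul_geometric_of_norm_lt_one k hx1)
  have hgeom := (hasSum_geometric_of_lt_one (by positivity) hr).mul_left
    (exp k * (exp 1 * r) ^ (m + 1))
  refine (htail.norm_le_of_bounded hgeom fun n => ?_).trans_eq (by field_simp)
  have hchoose : ((n + (m + 1) + k).choose k : ℝ) ≤ exp 1 ^ (n + (m + 1) + k) := calc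
    ((n + (m + 1) + k).choose k : ℝ) ≤ 2 ^ (n + (m + 1) + k) := by
      exact_mod_cast Nat.choose_le_two_pow _ _
    _ ≤ exp 1 ^ (n + (m + 1) + k) :=
      pow_le_pow_left₀ zero_le_two (by linarith [add_one_le_exp (1 : ℝ)]) _
  calc ‖((n + (m + 1) + k).choose k : 𝕜) * x ^ (n + (m + 1))‖
      ≤ exp 1 ^ (n + (m + 1) + k) * r ^ (n + (m + 1)) := by
        rw [norm_mul, norm_pow]
        gcongr
        exact ((Nat.norm_cast_le _).trans_eq (by rw [norm_one, mul_one])).trans hchoose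
    _ = exp k * (exp 1 * r) ^ (m + 1) * (exp 1 * r) ^ n := by
        rw [← exp_one_pow]; ring

variable {𝕜 : Type*} [NormedField 𝕜]

/-- The degree `m` Taylor polynomial of `t ↦ (ω + t) ^ (-(k + 1))` at `t = 0`. -/
def invPowTaylor (ω t : 𝕜) (k m : ℕ) : 𝕜 :=
  ∑ n ∈ Finset.range (m + 1), ((n + k).choose n : 𝕜) * (-t) ^ n / ω ^ (n + k + 1)

@[fun_prop]
theorem continuous_invPowTaylor (ω : 𝕜) (k m : ℕ) : Continuous fun t => invPowTaylor ω t k m := by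
  unfold invPowTaylor
  fun_prop

theorem norm_add_zpow_sub_invPowTaylor_le [HasSummableGeomSeries 𝕜] {ω t : 𝕜} {r : ℝ}
    (ht : ‖t‖ ≤ r) (hr : exp 1 * r < ‖ω‖) (k m : ℕ) :
    ‖(ω + t) ^ (-((k : ℤ) + 1)) - invPowTaylor ω t k m‖
      ≤ exp k / ‖ω‖ ^ (k + 1) * ((exp 1 * r / ‖ω‖) ^ (m + 1) / (1 - exp 1 * r / ‖ω‖)) := by
  have hr0 : 0 ≤ r := (norm_nonneg t).trans ht
  have hω : 0 < ‖ω‖ := lt_of_le_of_lt (by positivity) hr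
  have hω0 : ω ≠ 0 := norm_pos_iff.1 hω
  have hexpand : (ω + t) ^ (-((k : ℤ) + 1)) - invPowTaylor ω t k m
      = (1 / (1 - (-t / ω)) ^ (k + 1)
        - ∑ n ∈ Finset.range (m + 1), ((n + k).choose k : 𝕜) * (-t / ω) ^ n) / ω ^ (k + 1) := by
    rw [invPowTaylor, sub_div, Finset.sum_div]
    congr 1
    · rw [one_sub_div hω0, sub_neg_eq_add, div_pow, zpow_neg, ← Nat.cast_succ, zpow_natCast]
      field_simp
    · refine Finset.sum_congr rfl fun n _ => ?_
      rw [Nat.choose_symm_add, div_pow]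
      field_simp
      ring
  rw [hexpand, norm_div, norm_pow, div_eq_inv_mul, div_eq_inv_mul (exp _), mul_assoc]
  gcongr
  have hx : ‖-t / ω‖ ≤ r / ‖ω‖ := by rw [norm_div, norm_neg]; gcongr
  have hr' : exp 1 * (r / ‖ω‖) < 1 := by rwa [← mul_div_assoc, div_lt_one hω]
  simpa only [mul_div_assoc] using norm_one_div_one_sub_pow_sub_sum_le hx hr' k m

end InvPowTaylor

open MeasureTheory Complex intervalIntegral

section ExpTransform

variable {f : ℝ → ℂ} {a b : ℝ}

theorem hasDerivAt_integral_mul_pow_mul_exp (hf : IntervalIntegrable f volume a b)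
    (c z : ℂ) (n : ℕ) :
    HasDerivAt (fun w : ℂ => ∫ y in a..b, f y * ((c * y) ^ n * exp (c * w * y)))
      (∫ y in a..b, f y * ((c * y) ^ (n + 1) * exp (c * z * y))) z := by
  have hG : Continuous fun p : ℂ × ℝ => (c * p.2) ^ (n + 1) * exp (c * p.1 * p.2) := by
    fun_prop
  obtain ⟨C, hC⟩ := ((isCompact_closedBall z 1).prod isCompact_uIcc).exists_bound_of_continuousOn
    hG.continuousOn
  have hfg : ∀ {g : ℝ → ℂ}, Continuous g → IntervalIntegrable (fun y => f y * g y) volume a b :=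
    fun hg => hf.mul_continuousOn hg.continuousOn
  refine (hasDerivAt_integral_of_dominated_loc_of_deriv_le
    (F' := fun w y => f y * ((c * y) ^ (n + 1) * exp (c * w * y))) (bound := fun y => ‖f y‖ * C)
    (Metric.ball_mem_nhds z one_pos) (.of_forall fun w => (hfg (by fun_prop)).def'.1)
    (hfg (by fun_prop)) (hfg (by fun_prop)).def'.1 ?_ (hf.norm.mul_const C) ?_).2
  · filter_upwards with y hy w hw
    rw [norm_mul]
    exact mul_le_mul_of_nonneg_left
      (hC (w, y) ⟨Metric.ball_subset_closedBall hw, Set.uIoc_subset_uIcc hy⟩) (norm_nonneg _)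
  · filter_upwards with y _ w _
    have h := ((((hasDerivAt_id w).const_mul c).mul_const (y : ℂ)).cexp.const_mul
      ((c * y) ^ n)).const_mul (f y)
    exact h.congr_deriv (by simp only [id_eq]; ring)

theorem iteratedDeriv_integral_mul_exp (hf : IntervalIntegrable f volume a b) (c : ℂ) (n : ℕ) :
    iteratedDeriv n (fun z : ℂ => ∫ y in a..b, f y * exp (c * z * y))
      = fun z => ∫ y in a..b, f y * ((c * y) ^ n * exp (c * z * y)) := by
  induction n with
  | zero => simp
  | succ n ih =>
    ext z
    rw [iteratedDeriv_succ, ih, (hasDerivAt_integral_mul_pow_mul_exp hf c z n).deriv]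

theorem sum_mul_iteratedDeriv_integral_mul_exp (hf : IntervalIntegrable f volume a b)
    (c z : ℂ) (s : Finset ℕ) (u : ℕ → ℂ) :
    ∑ n ∈ s, u n * iteratedDeriv n (fun z : ℂ => ∫ y in a..b, f y * exp (c * z * y)) z
      = ∫ y in a..b, f y * exp (c * z * y) * ∑ n ∈ s, u n * (c * y) ^ n := by
  simp_rw [iteratedDeriv_integral_mul_exp hf, ← intervalIntegral.integral_const_mul]
  rw [← integral_finsetSum fun n _ => (hf.mul_continuousOn (by fun_prop)).const_mul _]
  refine integral_congr fun y _ => ?_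
  simp only [Finset.mul_sum]
  exact Finset.sum_congr rfl fun n _ => by ring

theorem sum_choose_mul_iteratedDeriv_eq_integral (hf : IntervalIntegrable f volume a b)
    (z ω : ℂ) (k m : ℕ) :
    ∑ n ∈ Finset.range (m + 1), ((n + k).choose n : ℂ) * (-I) ^ n *
        iteratedDeriv n (fun z : ℂ => ∫ y in a..b, f y * exp (-I * z * y)) z / ω ^ (n + k + 1)
      = ∫ y in a..b, f y * exp (-I * z * y) * invPowTaylor ω (y : ℂ) k m := by
  have hpow : ∀ (n : ℕ) (y : ℂ), (-I) ^ n * (-I * y) ^ n = (-y) ^ n := fun n y => by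
    rw [← mul_pow]
    congr 1
    linear_combination y * I_sq
  calc _ = ∑ n ∈ Finset.range (m + 1), ((n + k).choose n * (-I) ^ n / ω ^ (n + k + 1) : ℂ)
          * iteratedDeriv n (fun z : ℂ => ∫ y in a..b, f y * exp (-I * z * y)) z :=
        Finset.sum_congr rfl fun n _ => by ring
    _ = _ := sum_mul_iteratedDeriv_integral_mul_exp hf _ _ _ _
    _ = _ := integral_congr fun y _ => by
        simp only [invPowTaylor, Finset.mul_sum]
        refine Finset.sum_congr rfl fun n _ => ?_
        linear_combination f y * exp (-I * z * y) * (n + k).choose n / ω ^ (n + k + 1) * hpow n y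

end ExpTransform

theorem integral_zpow_mul_comp_sub_mul_exp (f : ℝ → ℂ) (ω ε : ℝ) (c : ℂ) (p : ℤ) :
    ∫ y in (ω - ε)..(ω + ε), (y : ℂ) ^ p * f (y - ω) * exp (c * y)
      = exp (c * ω) * ∫ t in (-ε)..ε, f t * exp (c * t) * ((ω : ℂ) + t) ^ p := by
  rw [show ω - ε = -ε + ω by ring, show ω + ε = ε + ω by ring, ← integral_comp_add_right _ ω,
    ← intervalIntegral.integral_const_mul]
  refine integral_congr fun t _ => ?_
  simp only [add_sub_cancel_right, ofReal_add, add_comm (t : ℂ), mul_add, exp_add]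
  ring

theorem integral_zpow_mul_exp_sub_sum_iteratedDeriv {f : ℝ → ℂ} {ε ω : ℝ}
    (hf : IntervalIntegrable f volume (-ε) ε) (hε : 0 ≤ ε) (hεω : ε < ω) {c z : ℂ}
    (hz : -I * z = c) (k m : ℕ) :
    (∫ y in (ω - ε)..(ω + ε), (y : ℂ) ^ (-((k : ℤ) + 1)) * f (y - ω) * exp (c * y))
      - exp (c * ω) * ∑ n ∈ Finset.range (m + 1), ((n + k).choose n : ℂ) * (-I) ^ n *
        iteratedDeriv n (fun z : ℂ => ∫ y in (-ε)..ε, f y * exp (-I * z * y)) z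
          / (ω : ℂ) ^ (n + k + 1)
      = exp (c * ω) * ∫ t in (-ε)..ε, f t *
          (exp (c * t) * (((ω : ℂ) + t) ^ (-((k : ℤ) + 1)) - invPowTaylor (ω : ℂ) t k m)) := by
  have hP : ContinuousOn (fun t : ℝ => ((ω : ℂ) + t) ^ (-((k : ℤ) + 1))) (Set.uIcc (-ε) ε) := by
    refine (continuous_const.add continuous_ofReal).continuousOn.zpow₀ _ fun t ht => .inl ?_
    rw [Set.uIcc_of_le (by linarith)] at ht
    show (ω : ℂ) + t ≠ 0
    exact_mod_cast (by linarith [ht.1] : ω + t ≠ 0)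
  rw [integral_zpow_mul_comp_sub_mul_exp, sum_choose_mul_iteratedDeriv_eq_integral hf, hz,
    ← mul_sub,
    ← integral_sub (hf.mul_continuousOn (by fun_prop) |>.mul_continuousOn hP)
      (hf.mul_continuousOn (by fun_prop) |>.mul_continuousOn (by fun_prop))]
  exact congrArg _ (integral_congr fun t _ => by ring)

theorem norm_intervalIntegral_mul_le {f g : ℝ → ℂ} {a b B : ℝ} (hab : a ≤ b)
    (hf : IntegrableOn f (Set.Icc a b)) (hg : ∀ t ∈ Set.Icc a b, ‖g t‖ ≤ B) :
    ‖∫ t in a..b, f t * g t‖ ≤ (∫ t in Set.Icc a b, ‖f t‖) * B := by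
  have hB : IntervalIntegrable (fun t => ‖f t‖ * B) volume a b :=
    ((intervalIntegrable_iff_integrableOn_Icc_of_le hab).2 hf).norm.mul_const B
  refine (norm_integral_le_of_norm_le hab (.of_forall fun t ht => ?_) hB).trans_eq ?_
  · rw [norm_mul]
    exact mul_le_mul_of_nonneg_left (hg t (Set.Ioc_subset_Icc_self ht)) (norm_nonneg _)
  · rw [intervalIntegral.integral_mul_const, integral_of_le hab, integral_Icc_eq_integral_Ioc]

theorem norm_exp_mul_ofReal_le {z : ℂ} {r t s : ℝ} (hz : |z.re| ≤ r) (ht : |t| ≤ s) :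
    ‖exp (z * t)‖ ≤ Real.exp (r * s) := by
  rw [norm_exp, re_mul_ofReal, Real.exp_le_exp]
  calc z.re * t ≤ |z.re| * |t| := (le_abs_self _).trans_eq (abs_mul _ _)
    _ ≤ r * s := mul_le_mul hz ht (abs_nonneg t) ((abs_nonneg _).trans hz)

theorem norm_integral_mul_exp_mul_zpow_sub_invPowTaylor_le {f : ℝ → ℂ} {ε ω r : ℝ} {z : ℂ}
    (hf : IntegrableOn f (Set.Icc (-ε) ε)) (hε : 0 ≤ ε) (hz : |z.re| ≤ r)
    (heεω : Real.exp 1 * ε < ω) (k m : ℕ) :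
    ‖∫ t in (-ε)..ε,
        f t * (exp (z * t) * (((ω : ℂ) + t) ^ (-((k : ℤ) + 1)) - invPowTaylor (ω : ℂ) t k m))‖
      ≤ (∫ t in Set.Icc (-ε) ε, ‖f t‖) * (Real.exp (r * ε) * (Real.exp k / ω ^ (k + 1) *
          ((Real.exp 1 * ε / ω) ^ (m + 1) / (1 - Real.exp 1 * ε / ω)))) := by
  have hω' : ‖(ω : ℂ)‖ = ω :=
    Complex.norm_of_nonneg ((by positivity : 0 ≤ Real.exp 1 * ε).trans heεω.le)
  refine norm_intervalIntegral_mul_le (by linarith) hf fun t ht => ?_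
  have ht : |t| ≤ ε := abs_le.2 ht
  rw [norm_mul]
  gcongr
  · exact norm_exp_mul_ofReal_le hz ht
  · have h := norm_add_zpow_sub_invPowTaylor_le
      (by rwa [Complex.norm_real, Real.norm_eq_abs]) (hω'.symm ▸ heεω) k m
    rwa [hω'] at h

theorem F_expansion_general
    (ε ω : ℝ) (K : ℝ → ℝ) (ρ : ℂ) (j m : ℕ)
    (hε : 0 < ε) (hεω : ε < ω) (heεω : Real.exp 1 * ε < ω)
    (hK : MeasureTheory.IntegrableOn K (Set.Icc (-ε) ε))
    (hK1 : (∫ y in Set.Icc (-ε) ε, |K y|) = 1)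
    (hβ : ρ.re ∈ Set.Icc (0 : ℝ) 1)
    (hj : 2 ≤ j) :
    Norm.norm
      (((-1 : ℂ) ^ j * ∫ y in (ω - ε)..(ω + ε),
          (y : ℂ) ^ ((1 : ℤ) - (j : ℤ)) * ((K (y - ω) : ℝ) : ℂ) *
            Complex.exp ((1/2 - ρ) * y))
        - (-1 : ℂ) ^ j * Complex.exp ((1/2 - ρ) * ω) *
            ∑ n ∈ Finset.range (m + 1),
              ((n + j - 2).choose n : ℂ) * (-Complex.I) ^ n *
                iteratedDeriv n
                  (fun z : ℂ => ∫ y in (-ε)..ε, ((K y : ℝ) : ℂ) *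
                    Complex.exp (-Complex.I * z * y))
                  (ρ / Complex.I - 1 / (2 * Complex.I))
                / (ω : ℂ) ^ (n + j - 1))
      ≤ Real.exp ((j : ℝ) - 2 + ε / 2) * Real.exp ((1/2 - ρ.re) * ω) / ω ^ (j - 1)
          * ((Real.exp 1 * ε / ω) ^ (m + 1) / (1 - Real.exp 1 * ε / ω)) := by
  obtain ⟨k, rfl⟩ : ∃ k, j = k + 2 := ⟨j - 2, by omega⟩
  have hz : -I * (ρ / I - 1 / (2 * I)) = 1 / 2 - ρ := by field_simp; ring
  have hre : (1 / 2 - ρ).re = 1 / 2 - ρ.re := by simp only [sub_re, div_ofNat_re, one_re]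
  have hc : |(1 / 2 - ρ).re| ≤ 1 / 2 :=
    hre ▸ abs_le.2 ⟨by linarith [hβ.2], by linarith [hβ.1]⟩
  have hbound := norm_integral_mul_exp_mul_zpow_sub_invPowTaylor_le hK.ofReal hε.le hc heεω k m
  simp only [RCLike.norm_ofReal, hK1, one_mul] at hbound
  have hKi : IntervalIntegrable (fun t => (K t : ℂ)) volume (-ε) ε :=
    (intervalIntegrable_iff_integrableOn_Icc_of_le (by linarith)).2 hK.ofReal
  simp only [show ∀ n, n + (k + 2) - 2 = n + k by omega,
    show ∀ n, n + (k + 2) - 1 = n + k + 1 by omega,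
    show (1 : ℤ) - ((k + 2 : ℕ) : ℤ) = -((k : ℤ) + 1) by push_cast; ring]
  rw [mul_assoc _ (exp _), ← mul_sub,
    integral_zpow_mul_exp_sub_sum_iteratedDeriv hKi hε.le hεω hz, norm_mul, norm_mul, norm_exp,
    re_mul_ofReal, hre, norm_pow, norm_neg, norm_one, one_pow, one_mul,
    show k + 2 - 1 = k + 1 by omega]
  calc _ ≤ Real.exp ((1 / 2 - ρ.re) * ω) * (Real.exp (1 / 2 * ε) * (Real.exp k / ω ^ (k + 1) *
        ((Real.exp 1 * ε / ω) ^ (m + 1) / (1 - Real.exp 1 * ε / ω)))) :=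
      mul_le_mul_of_nonneg_left hbound (Real.exp_nonneg _)
    _ = _ := by
      rw [show ((k + 2 : ℕ) : ℝ) - 2 + ε / 2 = k + 1 / 2 * ε by push_cast; ring, Real.exp_add]
      ring

theorem F_expansion
    (ε ω : ℝ) (K : ℝ → ℝ) (ρ : ℂ) (j m : ℕ)
    (hε : 0 < ε) (hεω : ε < ω) (heεω : Real.exp 1 * ε < ω)
    (hK : MeasureTheory.IntegrableOn K (Set.Icc (-ε) ε))
    (hK1 : (∫ y in Set.Icc (-ε) ε, |K y|) = 1)
    (hβ : ρ.re ∈ Set.Icc (0 : ℝ) 1) (hγ : ρ.im ≠ 0)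
    (hj : 2 ≤ j) :
    Norm.norm
      (((-1 : ℂ) ^ j * ∫ y in (ω - ε)..(ω + ε),
          (y : ℂ) ^ ((1 : ℤ) - (j : ℤ)) * ((K (y - ω) : ℝ) : ℂ) *
            Complex.exp ((1/2 - ρ) * y))
        - (-1 : ℂ) ^ j * Complex.exp ((1/2 - ρ) * ω) *
            ∑ n ∈ Finset.range (m + 1),
              ((n + j - 2).choose n : ℂ) * (-Complex.I) ^ n *
                iteratedDeriv n
                  (fun z : ℂ => ∫ y in (-ε)..ε, ((K y : ℝ) : ℂ) *
                    Complex.exp (-Complex.I * z * y))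
                  (ρ / Complex.I - 1 / (2 * Complex.I))
                / (ω : ℂ) ^ (n + j - 1))
      ≤ Real.exp ((j : ℝ) - 2 + ε / 2) * Real.exp ((1/2 - ρ.re) * ω) / ω ^ (j - 1)
          * ((Real.exp 1 * ε / ω) ^ (m + 1) / (1 - Real.exp 1 * ε / ω)) :=
  F_expansion_general ε ω K ρ j m hε hεω heεω hK hK1 hβ hj
end

section
/- Let 0 < ε ≤ δ < c/100, let n ≥ 0 be an integer, and let z ∈ ℂ satisfy |Re(z)| ≥ c/ε and |Im(z)| ≤ 1/2. Then |ℓ_{c,ε}^{(n)}(z)| ≤ n! · (c·e^{1.56√(δc)}/sinh c) · (2ε/δ)^n, where ℓ_{c,ε}^{(n)} denotes the n-th complex derivative of ℓ_{c,ε}. -/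
open scoped BigOperators

/-- The entire function `w ↦ sin(√w)/√w = ∑ (-1)ⁿ wⁿ/(2n+1)!`. -/
noncomputable def sincSqrt (w : ℂ) : ℂ :=
  ∑' n : ℕ, (-1) ^ n * w ^ n / ((2 * n + 1).factorial : ℂ)

/-- The Logan function `ℓ_c(z) = (c/sinh c)·sin(√(z²-c²))/√(z²-c²)`
(entire extension). -/
noncomputable def loganEll (c : ℝ) (z : ℂ) : ℂ :=
  (c / Real.sinh c) * sincSqrt (z ^ 2 - (c : ℂ) ^ 2)

/-- `ℓ_{c,ε}(z) = ℓ_c(εz)`. -/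
noncomputable def loganEllE (c ε : ℝ) (z : ℂ) : ℂ := loganEll c (ε * z)

/-!
Cauchy's estimate on the circle of radius `δ/(2ε)` about `z` reduces the claim to the bound
`|ℓ_{c,ε}(w)| ≤ c e^{1.56√(δc)} / sinh c` on that circle. There `u = εw` has `|Re u| ≥ c - δ/2`
and `|Im u| ≤ δ`, so `W = u² - c²` lies in the parabolic region `(Im W)² ≤ 4k²(Re W + k²)`,
`k = 1.56√(δc)`, which consists of the squares `ζ²` with `|Im ζ| ≤ k`. Finally
`sincSqrt (ζ²) = sin ζ / ζ`, and `|sin ζ| ≤ |ζ| e^{|Im ζ|}` by the mean value inequality on a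
horizontal strip, where `|cos| ≤ e^{|Im|}`.
-/

open Complex Metric FormalMultilinearSeries

theorem Complex.norm_cos_le_exp_abs_im (w : ℂ) : ‖cos w‖ ≤ Real.exp |w.im| := by
  have hexp (s : ℂ) (hs : s.re = w.im ∨ s.re = -w.im) : ‖exp s‖ ≤ Real.exp |w.im| := by
    rw [norm_exp, Real.exp_le_exp]
    rcases hs with hs | hs <;> rw [hs]
    exacts [le_abs_self _, neg_le_abs _]
  rw [cos, norm_div, RCLike.norm_ofNat]
  have := norm_add_le (exp (w * I)) (exp (-w * I))
  have h1 := hexp (w * I) (by simp)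
  have h2 := hexp (-w * I) (by simp)
  linarith

theorem Complex.norm_sin_le_norm_mul_exp_abs_im (ζ : ℂ) :
    ‖sin ζ‖ ≤ ‖ζ‖ * Real.exp |ζ.im| := by
  set strip := imLm ⁻¹' closedBall (0 : ℝ) |ζ.im|
  have mem_strip (w : ℂ) : w ∈ strip ↔ |w.im| ≤ |ζ.im| := by simp [strip]
  have hbound (w : ℂ) (hw : w ∈ strip) : ‖deriv sin w‖ ≤ Real.exp |ζ.im| := by
    rw [Complex.deriv_sin]
    exact (norm_cos_le_exp_abs_im w).trans (Real.exp_le_exp.2 ((mem_strip w).1 hw))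
  rw [mul_comm]
  simpa using (convex_closedBall _ _).linear_preimage imLm |>.norm_image_sub_le_of_norm_deriv_le
    (fun w _ => differentiableAt_sin) hbound ((mem_strip 0).2 (by simp)) ((mem_strip ζ).2 le_rfl)

theorem sincSqrt_zero : sincSqrt 0 = 1 := by
  rw [sincSqrt, tsum_eq_single 0 fun n hn => by simp [hn]]
  simp

theorem sincSqrt_sq {ζ : ℂ} (hζ : ζ ≠ 0) : sincSqrt (ζ ^ 2) = sin ζ / ζ := by
  refine (((hasSum_sin ζ).div_const ζ).congr_fun fun n => ?_).tsum_eq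
  field_simp
  ring

theorem norm_sincSqrt_sq_le (ζ : ℂ) : ‖sincSqrt (ζ ^ 2)‖ ≤ Real.exp |ζ.im| := by
  rcases eq_or_ne ζ 0 with rfl | hζ
  · simp [sincSqrt_zero]
  · rw [sincSqrt_sq hζ, norm_div, div_le_iff₀ (norm_pos_iff.2 hζ), mul_comm]
    exact norm_sin_le_norm_mul_exp_abs_im ζ

theorem sq_im_le_of_sq_im_sq_le {ζ : ℂ} {K : ℝ} (hK : 0 < K)
    (h : (ζ ^ 2).im ^ 2 ≤ 4 * K * ((ζ ^ 2).re + K)) : ζ.im ^ 2 ≤ K := by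
  have hre : (ζ ^ 2).re = ζ.re ^ 2 - ζ.im ^ 2 := by simp [sq]
  have him : (ζ ^ 2).im = 2 * ζ.re * ζ.im := by simp [sq]; ring
  rw [hre, him] at h
  have : (ζ.re ^ 2 + K) * (ζ.im ^ 2 - K) ≤ 0 := by nlinarith
  nlinarith [sq_nonneg ζ.re]

theorem norm_sincSqrt_le_exp {W : ℂ} {k : ℝ} (hk : 0 < k)
    (hW : W.im ^ 2 ≤ 4 * k ^ 2 * (W.re + k ^ 2)) : ‖sincSqrt W‖ ≤ Real.exp k := by
  obtain ⟨ζ, rfl⟩ := IsAlgClosed.exists_pow_nat_eq W two_pos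
  have him : |ζ.im| ≤ k :=
    abs_le_of_sq_le_sq (sq_im_le_of_sq_im_sq_le (by positivity) hW) hk.le
  exact (norm_sincSqrt_sq_le ζ).trans (Real.exp_le_exp.2 him)

noncomputable def sincSqrtCoeff (n : ℕ) : ℂ := (-1) ^ n / ((2 * n + 1).factorial : ℂ)

theorem radius_ofScalars_sincSqrtCoeff : (ofScalars ℂ sincSqrtCoeff).radius = ⊤ := by
  refine radius_eq_top_of_summable_norm _ fun r => ?_
  refine (Real.summable_pow_div_factorial r).of_nonneg_of_le (fun n => by positivity) fun n => ?_
  rw [ofScalars_norm, sincSqrtCoeff, norm_div, norm_pow, norm_neg, norm_one, one_pow,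
    Complex.norm_natCast, one_div_mul_eq_div]
  gcongr
  omega

theorem sincSqrt_eq_ofScalarsSum : sincSqrt = ofScalarsSum sincSqrtCoeff := by
  rw [ofScalarsSum_eq_tsum]
  ext w
  exact tsum_congr fun n => by rw [sincSqrtCoeff, smul_eq_mul]; ring

theorem differentiable_sincSqrt : Differentiable ℂ sincSqrt := by
  have h := (ofScalars ℂ sincSqrtCoeff).hasFPowerSeriesOnBall
    (by rw [radius_ofScalars_sincSqrtCoeff]; exact ENNReal.zero_lt_top)
  rw [radius_ofScalars_sincSqrtCoeff] at h
  rw [sincSqrt_eq_ofScalarsSum, ← differentiableOn_univ, ← eball_top 0]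
  exact h.differentiableOn

-- With `a = Re u`, `K = κδc` and `|Im u| ≤ δ` the claim reduces to
-- `0 ≤ (a² - (c-δ/2)²)(K - δ²) + δ²((κ² - κ - 1)c² + (1 - 3κ/4)δc - δ²/4)`, where `κ = 1.56²`
-- makes `κ² - κ - 1` positive.
theorem sq_im_sq_sub_sq_le {c δ : ℝ} {u : ℂ} (hδ : 0 < δ) (hδc : δ ≤ c)
    (hre : c - δ / 2 ≤ |u.re|) (him : |u.im| ≤ δ) :
    (u ^ 2 - (c : ℂ) ^ 2).im ^ 2
      ≤ 4 * (1.56 ^ 2 * (δ * c)) * ((u ^ 2 - (c : ℂ) ^ 2).re + 1.56 ^ 2 * (δ * c)) := by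
  have hW_re : (u ^ 2 - (c : ℂ) ^ 2).re = u.re ^ 2 - u.im ^ 2 - c ^ 2 := by simp [sq]
  have hW_im : (u ^ 2 - (c : ℂ) ^ 2).im = 2 * u.re * u.im := by simp [sq]; ring
  rw [hW_re, hW_im]
  have ha : (c - δ / 2) ^ 2 ≤ u.re ^ 2 := by
    rw [← sq_abs u.re]; gcongr; linarith
  have hb : u.im ^ 2 ≤ δ ^ 2 := by
    rw [← sq_abs u.im]; gcongr
  have hK : δ ^ 2 ≤ 1.56 ^ 2 * (δ * c) := by nlinarith
  nlinarith [mul_le_mul_of_nonneg_left hb (sq_nonneg u.re),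
    mul_nonneg (sub_nonneg.2 ha) (sub_nonneg.2 hK),
    mul_nonneg (mul_nonneg (sq_nonneg δ) (sub_nonneg.2 hδc)) (hδ.le.trans hδc),
    mul_nonneg (mul_nonneg (sq_nonneg δ) (sub_nonneg.2 hδc)) hδ.le,
    pow_pos hδ 4]

theorem re_im_bounds_of_norm_sub_le {c ε δ : ℝ} {z w : ℂ} (hε : 0 < ε) (hεδ : ε ≤ δ)
    (hre : c / ε ≤ |z.re|) (him : |z.im| ≤ 1 / 2) (hw : ‖w - z‖ ≤ δ / (2 * ε)) :
    c - δ / 2 ≤ |(ε * w).re| ∧ |(ε * w).im| ≤ δ := by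
  have hdist : ‖(ε : ℂ) * w - ε * z‖ ≤ δ / 2 := by
    rw [← mul_sub, norm_mul, norm_real, Real.norm_of_nonneg hε.le]
    calc ε * ‖w - z‖ ≤ ε * (δ / (2 * ε)) := by gcongr
      _ = δ / 2 := by field_simp
  have hre' := (abs_re_le_norm _).trans hdist
  have him' := (abs_im_le_norm _).trans hdist
  simp only [sub_re, sub_im, re_ofReal_mul, im_ofReal_mul] at hre' him' ⊢
  have hzre : c ≤ |ε * z.re| := by rwa [abs_mul, abs_of_pos hε, ← div_le_iff₀' hε]
  have hzim : |ε * z.im| ≤ δ / 2 := by rw [abs_mul, abs_of_pos hε]; nlinarith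
  constructor
  · linarith [abs_sub_abs_le_abs_sub (ε * z.re) (ε * w.re), abs_sub_comm (ε * z.re) (ε * w.re)]
  · linarith [abs_sub_abs_le_abs_sub (ε * w.im) (ε * z.im)]

theorem norm_loganEll_le {c δ : ℝ} {u : ℂ} (hδ : 0 < δ) (hδc : δ ≤ c)
    (hre : c - δ / 2 ≤ |u.re|) (him : |u.im| ≤ δ) :
    ‖loganEll c u‖ ≤ c * Real.exp (1.56 * Real.sqrt (δ * c)) / Real.sinh c := by
  have hc : 0 < c := hδ.trans_le hδc
  have hk : 0 < 1.56 * Real.sqrt (δ * c) := by positivity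
  have hk_sq : (1.56 * Real.sqrt (δ * c)) ^ 2 = 1.56 ^ 2 * (δ * c) := by
    rw [mul_pow, Real.sq_sqrt (by positivity)]
  have hsinc := norm_sincSqrt_le_exp hk (hk_sq ▸ sq_im_sq_sub_sq_le hδ hδc hre him)
  rw [loganEll, norm_mul, norm_div, norm_real, norm_real, Real.norm_of_nonneg hc.le,
    Real.norm_of_nonneg (Real.sinh_pos_iff.2 hc).le, div_mul_eq_mul_div]
  gcongr

theorem differentiable_loganEllE (c ε : ℝ) : Differentiable ℂ (loganEllE c ε) :=
  (differentiable_sincSqrt.comp (by fun_prop)).const_mul _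

theorem loganEll_deriv_bound
    (c ε δ : ℝ) (n : ℕ) (z : ℂ)
    (hε : 0 < ε) (hεδ : ε ≤ δ) (hδ : δ < c / 100)
    (hre : c / ε ≤ |z.re|) (him : |z.im| ≤ 1 / 2) :
    ‖iteratedDeriv n (loganEllE c ε) z‖
      ≤ (n.factorial : ℝ) * (c * Real.exp (1.56 * Real.sqrt (δ * c)) / Real.sinh c)
          * (2 * ε / δ) ^ n := by
  have hδ0 : 0 < δ := hε.trans_le hεδ
  have hr : 0 < δ / (2 * ε) := by positivity
  have hbound (w : ℂ) (hw : w ∈ sphere z (δ / (2 * ε))) :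
      ‖loganEllE c ε w‖ ≤ c * Real.exp (1.56 * Real.sqrt (δ * c)) / Real.sinh c := by
    obtain ⟨hre', him'⟩ := re_im_bounds_of_norm_sub_le hε hεδ hre him (mem_sphere_iff_norm.1 hw).le
    exact norm_loganEll_le hδ0 (by linarith) hre' him'
  calc ‖iteratedDeriv n (loganEllE c ε) z‖
      ≤ n.factorial * (c * Real.exp (1.56 * Real.sqrt (δ * c)) / Real.sinh c)
          / (δ / (2 * ε)) ^ n :=
        norm_iteratedDeriv_le_of_forall_mem_sphere_norm_le n hr
          (differentiable_loganEllE c ε).diffContOnCl hbound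
    _ = _ := by rw [div_eq_mul_inv, ← inv_pow, inv_div]
end

section
/- Let c > 0 and 0 < δ < c/100, and let ξ ∈ ℂ satisfy Re(ξ) ≥ c − δ and 0 ≤ Im(ξ) ≤ δ. Then |Im(√(ξ² − c²))| ≤ 1.56·√(δc), where √ denotes the principal branch of the complex square root. -/
/-!
Since `|Im √w| = √((‖w‖ - Re w) / 2)`, it suffices to show `‖w‖ ≤ Re w + K` for `w = ξ² - c²` and
`K = 2 · 1.56² · δc`, i.e. `(Im w)² ≤ 2K Re w + K²`. Writing `ξ = x + iy`, the difference of the two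
sides increases with `x²` and decreases with `y²`, so the worst case is the corner `x = c - δ`,
`y = δ`, where the inequality becomes `4δ²(c - δ)² ≤ K (K - 4δc)`. This holds as soon as
`K ≥ 2(1 + √2)δc`, and `1.56² > 1 + √2`.
-/

lemma Complex.norm_le_re_add_of_im_sq_le {z : ℂ} {K : ℝ} (hK : 0 ≤ z.re + K)
    (h : z.im ^ 2 ≤ 2 * K * z.re + K ^ 2) : ‖z‖ ≤ z.re + K := by
  rw [Complex.norm_def, Complex.normSq_apply, Real.sqrt_le_left hK]
  nlinarith

section NearBranchPoint

variable {c δ x y : ℝ}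

lemma sq_sub_sq_sub_sq_add_nonneg (hδc : δ ≤ c) (hx : c - δ ≤ x) (hy0 : 0 ≤ y) (hy : y ≤ δ) :
    0 ≤ x ^ 2 - y ^ 2 - c ^ 2 + 4.8672 * (δ * c) := by
  have hx2 : (c - δ) ^ 2 ≤ x ^ 2 := pow_le_pow_left₀ (by linarith) hx 2
  have hy2 : y ^ 2 ≤ δ ^ 2 := pow_le_pow_left₀ hy0 hy 2
  nlinarith

lemma two_mul_mul_sq_le (hδc : δ ≤ c) (hx : c - δ ≤ x) (hy0 : 0 ≤ y) (hy : y ≤ δ) :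
    (2 * x * y) ^ 2 ≤ 2 * (4.8672 * (δ * c)) * (x ^ 2 - y ^ 2 - c ^ 2) + (4.8672 * (δ * c)) ^ 2 := by
  set K := 4.8672 * (δ * c) with hK
  have hδ0 : 0 ≤ δ := hy0.trans hy
  have hδ2 : δ ^ 2 ≤ δ * c := by nlinarith
  have hx2 : (c - δ) ^ 2 ≤ x ^ 2 := pow_le_pow_left₀ (by linarith) hx 2
  have hy2 : y ^ 2 ≤ δ ^ 2 := pow_le_pow_left₀ hy0 hy 2
  have hmono_x : (c - δ) ^ 2 * (2 * K - 4 * y ^ 2) ≤ x ^ 2 * (2 * K - 4 * y ^ 2) :=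
    mul_le_mul_of_nonneg_right hx2 (by linarith [sq_nonneg δ])
  have hmono_y : y ^ 2 * (4 * (c - δ) ^ 2 + 2 * K) ≤ δ ^ 2 * (4 * (c - δ) ^ 2 + 2 * K) :=
    mul_le_mul_of_nonneg_right hy2 (by nlinarith)
  have hcorner : 4 * δ ^ 2 * (c - δ) ^ 2 ≤ K * (K - 4 * δ * c) := by
    have hcδ : (c - δ) ^ 2 ≤ c ^ 2 := by nlinarith
    have := mul_le_mul_of_nonneg_left hcδ (sq_nonneg δ)
    rw [hK]
    nlinarith
  nlinarith

end NearBranchPoint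

lemma norm_sq_sub_sq_le_re_add {c δ : ℝ} {ξ : ℂ} (hδc : δ ≤ c) (hre : c - δ ≤ ξ.re)
    (him0 : 0 ≤ ξ.im) (him : ξ.im ≤ δ) :
    ‖ξ ^ 2 - (c : ℂ) ^ 2‖ ≤ (ξ ^ 2 - (c : ℂ) ^ 2).re + 4.8672 * (δ * c) := by
  have hre_eq : (ξ ^ 2 - (c : ℂ) ^ 2).re = ξ.re ^ 2 - ξ.im ^ 2 - c ^ 2 := by
    simp [sq, Complex.mul_re]
  have him_eq : (ξ ^ 2 - (c : ℂ) ^ 2).im = 2 * ξ.re * ξ.im := by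
    simp only [sq, Complex.sub_im, Complex.mul_im, Complex.ofReal_re, Complex.ofReal_im, mul_zero,
      zero_mul, add_zero, sub_zero]
    ring
  apply Complex.norm_le_re_add_of_im_sq_le
  · rw [hre_eq]; exact sq_sub_sq_sub_sq_add_nonneg hδc hre him0 him
  · rw [hre_eq, him_eq]; exact two_mul_mul_sq_le hδc hre him0 him

theorem im_sqrt_bound_general
    (c δ : ℝ) (ξ : ℂ)
    (hδ : δ < c / 100)
    (hre : c - δ ≤ ξ.re) (him0 : 0 ≤ ξ.im) (him : ξ.im ≤ δ) :
    |((ξ ^ 2 - (c : ℂ) ^ 2) ^ ((1 : ℂ) / 2)).im| ≤ 1.56 * Real.sqrt (δ * c) := by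
  have hδc : δ ≤ c := by linarith
  have hconst : 1.56 * Real.sqrt (δ * c) = Real.sqrt (4.8672 * (δ * c) / 2) := by
    rw [show 4.8672 * (δ * c) / 2 = 1.56 ^ 2 * (δ * c) by ring,
      Real.sqrt_mul (by norm_num : (0 : ℝ) ≤ 1.56 ^ 2), Real.sqrt_sq (by norm_num)]
  rw [one_div, Complex.abs_cpow_inv_two_im, hconst]
  have hnorm := norm_sq_sub_sq_le_re_add hδc hre him0 him
  exact Real.sqrt_le_sqrt (by linarith)

theorem im_sqrt_bound
    (c δ : ℝ) (ξ : ℂ)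
    (hc : 0 < c) (hδ0 : 0 < δ) (hδ : δ < c / 100)
    (hre : c - δ ≤ ξ.re) (him0 : 0 ≤ ξ.im) (him : ξ.im ≤ δ) :
    |((ξ ^ 2 - (c : ℂ) ^ 2) ^ ((1 : ℂ) / 2)).im| ≤ 1.56 * Real.sqrt (δ * c) :=
  im_sqrt_bound_general c δ ξ hδ hre him0 him
end

section
/- Let x be a real number with log x > 200, let 0 < ε ≤ 1/2, and suppose that |ψ(t) − t| < ε·t for all t ≥ √x, where ψ is the Chebyshev function. Then ∑_{p > √x} 1/p² < 2(1+3ε)/(√x · log x), the sum running over primes p > √x. -/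
open scoped BigOperators

/-- The Chebyshev function `ψ(t) = ∑_{p^m ≤ t} log p = ∑_{n ≤ t} Λ(n)`. -/
noncomputable def chebyshevPsi (t : ℝ) : ℝ :=
  ∑ n ∈ Finset.Icc 1 ⌊t⌋₊, ArithmeticFunction.vonMangoldt n

/-! For primes `p > √x` we have `log p > (log x) / 2`, so the sum is at most `2 / log x` times
`∑_{n > √x} Λ(n) / n²`. Partial summation against `ψ(t) ≤ (1 + ε) t` bounds this by
`2(1 + ε)/z - ψ(√x)/z²` with `z = ⌊√x⌋ + 1`, and the lower bound `ψ(√x) ≥ (1 - ε)√x` turns that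
into at most `(1 + 3ε)/√x`. -/

open Finset Real ArithmeticFunction.vonMangoldt
open ArithmeticFunction (vonMangoldt_apply_prime vonMangoldt_nonneg)

lemma chebyshevPsi_natCast (M : ℕ) : chebyshevPsi M = ∑ n ∈ Icc 1 M, Λ n := by
  simp [chebyshevPsi]

lemma chebyshevPsi_natFloor (t : ℝ) : chebyshevPsi ⌊t⌋₊ = chebyshevPsi t := by
  simp [chebyshevPsi]

lemma div_sq_sub_div_add_one_sq_le {A c u : ℝ} (hc : 0 ≤ c) (hu : 0 < u) (hA : A ≤ c * u) :
    A / u ^ 2 - A / (u + 1) ^ 2 ≤ 2 * c / u - 2 * c / (u + 1) := by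
  have key : A * (2 * u + 1) ≤ 2 * c * u * (u + 1) := by
    nlinarith [mul_le_mul_of_nonneg_right hA (by positivity : (0 : ℝ) ≤ 2 * u + 1)]
  rw [div_sub_div _ _ (by positivity) (by positivity), div_sub_div _ _ hu.ne' (by positivity),
    div_le_div_iff₀ (by positivity) (by positivity)]
  nlinarith [mul_le_mul_of_nonneg_right key
    (by positivity : (0 : ℝ) ≤ u * (u + 1) * u ^ 2 * (u + 1) ^ 2)]

section PartialSummation

variable (a : ℕ → ℝ) {c : ℝ} {N : ℕ}

lemma sum_Icc_div_sq_add_le (hc : 0 ≤ c) (h : ∀ m, N < m → ∑ n ∈ Icc 1 m, a n ≤ c * m)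
    {M : ℕ} (hNM : N ≤ M) :
    ∑ n ∈ Icc (N + 1) M, a n / (n : ℝ) ^ 2
        + (2 * c / (M + 1) - (∑ n ∈ Icc 1 M, a n) / ((M : ℝ) + 1) ^ 2)
      ≤ 2 * c / (N + 1) - (∑ n ∈ Icc 1 N, a n) / ((N : ℝ) + 1) ^ 2 := by
  induction M, hNM using Nat.le_induction with
  | base => simp
  | succ M hNM ih =>
    have hA : ∑ n ∈ Icc 1 (M + 1), a n = ∑ n ∈ Icc 1 M, a n + a (M + 1) :=
      sum_Icc_succ_top (by omega) a
    have step := div_sq_sub_div_add_one_sq_le hc (by positivity : (0 : ℝ) < M + 1)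
      (by exact_mod_cast h (M + 1) (by omega))
    rw [hA] at step
    rw [sum_Icc_succ_top (by omega : N + 1 ≤ M + 1), hA]
    push_cast at step ⊢
    have hsplit : a (M + 1) / ((M : ℝ) + 1) ^ 2
        = (∑ n ∈ Icc 1 M, a n + a (M + 1)) / ((M : ℝ) + 1) ^ 2
          - (∑ n ∈ Icc 1 M, a n) / ((M : ℝ) + 1) ^ 2 := by ring
    linarith

lemma sum_Icc_div_sq_le (hc : 0 ≤ c) (h : ∀ m, N < m → ∑ n ∈ Icc 1 m, a n ≤ c * m)
    {M : ℕ} (hNM : N < M) :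
    ∑ n ∈ Icc (N + 1) M, a n / (n : ℝ) ^ 2
      ≤ 2 * c / (N + 1) - (∑ n ∈ Icc 1 N, a n) / ((N : ℝ) + 1) ^ 2 := by
  have hM : (∑ n ∈ Icc 1 M, a n) / ((M : ℝ) + 1) ^ 2 ≤ 2 * c / (M + 1) := by
    rw [div_le_div_iff₀ (by positivity) (by positivity)]
    nlinarith [h M hNM, mul_nonneg hc (by positivity : (0 : ℝ) ≤ ((M : ℝ) + 1) * (M + 2))]
  linarith [sum_Icc_div_sq_add_le a hc h hNM.le]

end PartialSummation

lemma two_mul_div_sub_mul_div_sq_le {ε y z : ℝ} (hε : 0 ≤ ε) (hy : 0 < y) (hyz : y ≤ z) :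
    2 * (1 + ε) / z - (1 - ε) * y / z ^ 2 ≤ (1 + 3 * ε) / y := by
  have hz : 0 < z := hy.trans_le hyz
  -- `(1 + 3ε) z² - 2(1 + ε) y z + (1 - ε) y² = (z - y)² + ε (z - y) (3z + y)`
  have key : 0 ≤ (z - y) ^ 2 + ε * ((z - y) * (3 * z + y)) := by
    have : 0 ≤ z - y := sub_nonneg.2 hyz
    positivity
  rw [div_sub_div _ _ hz.ne' (by positivity), div_le_div_iff₀ (by positivity) hy]
  nlinarith [mul_le_mul_of_nonneg_left key (by positivity : (0 : ℝ) ≤ z)]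

lemma sum_vonMangoldt_div_sq_le {y ε : ℝ} (hy : 0 < y) (hε : 0 ≤ ε)
    (hupper : ∀ t, y ≤ t → chebyshevPsi t ≤ (1 + ε) * t) (hlower : (1 - ε) * y ≤ chebyshevPsi y)
    (M : ℕ) : ∑ n ∈ Icc (⌊y⌋₊ + 1) M, Λ n / (n : ℝ) ^ 2 ≤ (1 + 3 * ε) / y := by
  set N := ⌊y⌋₊
  rcases le_or_gt M N with hMN | hNM
  · rw [Icc_eq_empty (by omega), sum_empty]
    positivity
  have hψ : ∀ m, N < m → ∑ n ∈ Icc 1 m, Λ n ≤ (1 + ε) * m := fun m hm => by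
    rw [← chebyshevPsi_natCast]
    exact hupper m (Nat.lt_of_floor_lt hm).le
  have hψN : (1 - ε) * y / ((N : ℝ) + 1) ^ 2 ≤ (∑ n ∈ Icc 1 N, Λ n) / ((N : ℝ) + 1) ^ 2 := by
    rw [← chebyshevPsi_natCast, chebyshevPsi_natFloor]
    gcongr
  calc ∑ n ∈ Icc (N + 1) M, Λ n / (n : ℝ) ^ 2
      ≤ 2 * (1 + ε) / (N + 1) - (∑ n ∈ Icc 1 N, Λ n) / ((N : ℝ) + 1) ^ 2 :=
        sum_Icc_div_sq_le _ (by positivity) hψ hNM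
    _ ≤ 2 * (1 + ε) / (N + 1) - (1 - ε) * y / ((N : ℝ) + 1) ^ 2 := by linarith
    _ ≤ (1 + 3 * ε) / y := two_mul_div_sub_mul_div_sq_le hε hy (Nat.lt_floor_add_one y).le

lemma log_mul_sum_primes_inv_sq_le {N M : ℕ} (s : Finset Nat.Primes)
    (hs : ∀ p ∈ s, (p : ℕ) ∈ Icc (N + 1) M) :
    log (N + 1) * ∑ p ∈ s, 1 / ((p : ℕ) : ℝ) ^ 2 ≤ ∑ n ∈ Icc (N + 1) M, Λ n / (n : ℝ) ^ 2 := by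
  have hsub : s.image ((↑) : Nat.Primes → ℕ) ⊆ Icc (N + 1) M := by
    intro n hn
    obtain ⟨p, hp, rfl⟩ := mem_image.1 hn
    exact hs p hp
  calc log (N + 1) * ∑ p ∈ s, 1 / ((p : ℕ) : ℝ) ^ 2
      ≤ ∑ p ∈ s, Λ p / ((p : ℕ) : ℝ) ^ 2 := by
        rw [mul_sum]
        refine sum_le_sum fun p hp => ?_
        rw [vonMangoldt_apply_prime p.prop, mul_one_div]
        have hNp : (N : ℝ) + 1 ≤ (p : ℕ) := by exact_mod_cast (mem_Icc.1 (hs p hp)).1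
        gcongr
    _ = ∑ n ∈ s.image ((↑) : Nat.Primes → ℕ), Λ n / (n : ℝ) ^ 2 :=
        (sum_image (f := fun n => Λ n / (n : ℝ) ^ 2)
          fun _ _ _ _ h => Nat.Primes.coe_nat_injective h).symm
    _ ≤ ∑ n ∈ Icc (N + 1) M, Λ n / (n : ℝ) ^ 2 :=
        sum_le_sum_of_subset_of_nonneg hsub fun _ _ _ =>
          div_nonneg vonMangoldt_nonneg (by positivity)

lemma log_mul_tsum_primes_inv_sq_le {y B : ℝ} (hy : 0 ≤ y)
    (hB : ∀ M, ∑ n ∈ Icc (⌊y⌋₊ + 1) M, Λ n / (n : ℝ) ^ 2 ≤ B) :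
    log (⌊y⌋₊ + 1) * ∑' p : Nat.Primes, (if y < ((p : ℕ) : ℝ) then 1 / ((p : ℕ) : ℝ) ^ 2 else 0)
      ≤ B := by
  rw [← tsum_mul_left]
  refine tsum_le_of_sum_le' (by simpa using hB 0) fun s => ?_
  set s' := s.filter fun p : Nat.Primes => y < ((p : ℕ) : ℝ)
  have hs' : ∀ p ∈ s', (p : ℕ) ∈ Icc (⌊y⌋₊ + 1) (s'.sup (↑)) := fun p hp =>
    mem_Icc.2 ⟨Nat.floor_lt hy |>.2 (mem_filter.1 hp).2, le_sup (f := ((↑) : Nat.Primes → ℕ)) hp⟩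
  calc ∑ p ∈ s, log (⌊y⌋₊ + 1) * (if y < ((p : ℕ) : ℝ) then 1 / ((p : ℕ) : ℝ) ^ 2 else 0)
      = log (⌊y⌋₊ + 1) * ∑ p ∈ s', 1 / ((p : ℕ) : ℝ) ^ 2 := by rw [← mul_sum, sum_filter]
    _ ≤ B := (log_mul_sum_primes_inv_sq_le s' hs').trans (hB _)

theorem prime_square_sum_bound_general
    (x ε : ℝ) (hx : 200 < Real.log x) (hε0 : 0 < ε)
    (hψ : ∀ t : ℝ, Real.sqrt x ≤ t → |chebyshevPsi t - t| < ε * t) :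
    (∑' p : Nat.Primes, if Real.sqrt x < ((p : ℕ) : ℝ) then 1 / ((p : ℕ) : ℝ) ^ 2 else 0)
      < 2 * (1 + 3 * ε) / (Real.sqrt x * Real.log x) := by
  set y := √x
  have hy : 0 < y := by
    refine (Real.sqrt_nonneg x).lt_of_ne fun hy0 => ?_
    simpa [← hy0, chebyshevPsi] using hψ 0 hy0.ge
  have hL : log x / 2 < log (⌊y⌋₊ + 1) := by
    rw [← Real.log_sqrt (Real.sqrt_pos.1 hy).le]
    exact log_lt_log hy (Nat.lt_floor_add_one y)
  have hbound := log_mul_tsum_primes_inv_sq_le hy.le <|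
    sum_vonMangoldt_div_sq_le hy hε0.le
      (fun t ht => by linarith [(abs_lt.1 (hψ t ht)).2])
      (by linarith [(abs_lt.1 (hψ y le_rfl)).1])
  calc _ ≤ (1 + 3 * ε) / y / log (⌊y⌋₊ + 1) := by
        rw [le_div_iff₀ (by linarith), mul_comm]
        exact hbound
    _ < (1 + 3 * ε) / y / (log x / 2) := by gcongr
    _ = 2 * (1 + 3 * ε) / (y * log x) := by field_simp

theorem prime_square_sum_bound
    (x ε : ℝ) (hx : 200 < Real.log x) (hε0 : 0 < ε) (hε : ε ≤ 1 / 2)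
    (hψ : ∀ t : ℝ, Real.sqrt x ≤ t → |chebyshevPsi t - t| < ε * t) :
    (∑' p : Nat.Primes, if Real.sqrt x < ((p : ℕ) : ℝ) then 1 / ((p : ℕ) : ℝ) ^ 2 else 0)
      < 2 * (1 + 3 * ε) / (Real.sqrt x * Real.log x) :=
  prime_square_sum_bound_general x ε hx hε0 hψ
end

section
/- For every real x > 1, ∑_{3 ≤ m ≤ log x} ∑_{p : p^m ≥ x} 1/(m p^m) ≤ (log x)/x + (ζ(2) − 1)·x^{−2/3}, where the inner sum runs over primes p with p^m ≥ x and the outer sum over integers m with 3 ≤ m ≤ log x. -/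
/-!
Fix `m ≥ 3` and let `a` be the least integer with `x ≤ a ^ m`. The inner sum is at most
`(1/m) ∑_{n ≥ a} n⁻ᵐ`, and comparing the terms with `n > a` to a telescoping sum
(the discrete form of `∫_a^∞ t⁻ᵐ dt`) gives
`∑_{n ≥ a} n⁻ᵐ ≤ a⁻ᵐ + a^{-(m-1)}/(m-1) ≤ 1/x + x^{-2/3}/(m-1)`,
because `a^{m-1} ≥ x^{(m-1)/m} ≥ x^{2/3}`. Summing over the at most `log x` values of `m`
and using `∑_{m ≥ 3} 1/(m(m-1)) = 1/2 < ζ(2) - 1` finishes the proof.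
-/

open Finset

theorem pow_succ_add_mul_pow_le_add_one_pow {R : Type*} [CommSemiring R] [PartialOrder R]
    [IsOrderedRing R] {t : R} (ht : 0 ≤ t) (n : ℕ) :
    t ^ (n + 1) + (n + 1) * t ^ n ≤ (t + 1) ^ (n + 1) := by
  induction n with
  | zero => simp
  | succ n ih =>
    calc t ^ (n + 2) + ((n + 1 : ℕ) + 1) * t ^ (n + 1)
        ≤ t ^ (n + 2) + ((n + 1 : ℕ) + 1) * t ^ (n + 1) + (n + 1) * t ^ n :=
          le_add_of_nonneg_right
            (mul_nonneg (add_nonneg n.cast_nonneg zero_le_one) (pow_nonneg ht n))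
      _ = (t + 1) * (t ^ (n + 1) + (n + 1) * t ^ n) := by push_cast; ring
      _ ≤ (t + 1) * (t + 1) ^ (n + 1) :=
          mul_le_mul_of_nonneg_left ih (add_nonneg ht zero_le_one)
      _ = (t + 1) ^ (n + 1 + 1) := by ring

theorem one_div_add_one_pow_le_sub_div {t : ℝ} (ht : 0 < t) (n : ℕ) :
    1 / (t + 1) ^ (n + 2) ≤ (1 / t ^ (n + 1) - 1 / (t + 1) ^ (n + 1)) / (n + 1) := by
  have hbinomial := pow_succ_add_mul_pow_le_add_one_pow ht.le n
  rw [div_sub_div _ _ (by positivity) (by positivity), div_div,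
    div_le_div_iff₀ (by positivity) (by positivity)]
  calc 1 * (t ^ (n + 1) * (t + 1) ^ (n + 1) * (n + 1))
      = (n + 1) * t ^ n * (t + 1) ^ (n + 1) * t := by ring
    _ ≤ (n + 1) * t ^ n * (t + 1) ^ (n + 1) * (t + 1) := by gcongr; linarith
    _ ≤ ((t + 1) ^ (n + 1) - t ^ (n + 1)) * (t + 1) ^ (n + 1) * (t + 1) := by
        gcongr; linarith
    _ = (1 * (t + 1) ^ (n + 1) - t ^ (n + 1) * 1) * (t + 1) ^ (n + 2) := by ring

theorem tsum_one_div_nat_add_pow_le {a : ℕ} (ha : 0 < a) (n : ℕ) :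
    ∑' i : ℕ, 1 / ((i + a : ℕ) : ℝ) ^ (n + 2) ≤
      1 / (a : ℝ) ^ (n + 2) + 1 / (a : ℝ) ^ (n + 1) / (n + 1) := by
  have hsum : Summable fun i : ℕ => 1 / ((i + a : ℕ) : ℝ) ^ (n + 2) :=
    (summable_nat_add_iff a).mpr (Real.summable_one_div_nat_pow.mpr (by omega))
  rw [hsum.tsum_eq_zero_add, zero_add]
  gcongr
  set F : ℕ → ℝ := fun i => 1 / ((i + a : ℕ) : ℝ) ^ (n + 1) / (n + 1)
  refine Real.tsum_le_of_sum_range_le (fun _ => by positivity) fun K => ?_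
  calc ∑ i ∈ range K, 1 / ((i + 1 + a : ℕ) : ℝ) ^ (n + 2)
      ≤ ∑ i ∈ range K, (F i - F (i + 1)) := by
        refine sum_le_sum fun i _ => ?_
        have hcast : ((i + 1 + a : ℕ) : ℝ) = ((i + a : ℕ) : ℝ) + 1 := by push_cast; ring
        simp only [F, hcast, ← sub_div]
        exact one_div_add_one_pow_le_sub_div (by positivity) n
    _ = F 0 - F K := sum_range_sub' F K
    _ ≤ F 0 := sub_le_self _ (by positivity)
    _ = 1 / (a : ℝ) ^ (n + 1) / (n + 1) := by simp [F]

theorem rpow_two_div_three_le_pow {x a : ℝ} (hx : 0 ≤ x) (ha : 1 ≤ a) {k : ℕ} (hk : 1 ≤ k)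
    (hxa : x ≤ a ^ (k + 2)) : x ^ ((2 : ℝ) / 3) ≤ a ^ (k + 1) := by
  rw [← pow_le_pow_iff_left₀ (by positivity) (by positivity) three_ne_zero]
  calc (x ^ ((2 : ℝ) / 3)) ^ 3 = x ^ 2 := by
        rw [← Real.rpow_natCast, ← Real.rpow_mul hx]; norm_num
    _ ≤ (a ^ (k + 2)) ^ 2 := by gcongr
    _ = a ^ (2 * k + 4) := by ring
    _ ≤ a ^ (3 * k + 3) := pow_le_pow_right₀ ha (by omega)
    _ = (a ^ (k + 1)) ^ 3 := by ring

theorem tsum_one_div_pow_of_le_pow_le {x : ℝ} (hx : 0 < x) {m : ℕ} (hm : 3 ≤ m) :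
    ∑' n : ℕ, (if x ≤ (n : ℝ) ^ m then 1 / (n : ℝ) ^ m else 0) ≤
      1 / x + x ^ (-(2 : ℝ) / 3) / (m - 1) := by
  obtain ⟨k, rfl⟩ : ∃ k, m = k + 2 := ⟨m - 2, by omega⟩
  have hex : ∃ n : ℕ, x ≤ (n : ℝ) ^ (k + 2) := by
    obtain ⟨n, hn⟩ := exists_nat_ge x
    refine ⟨n + 1, hn.trans ?_⟩
    push_cast
    exact (lt_add_one (n : ℝ)).le.trans (le_self_pow₀ (by linarith) (by omega))
  classical
  set a := Nat.find hex
  have ha : 0 < a := (Nat.find_pos hex).mpr <| by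
    rw [Nat.cast_zero, zero_pow (by omega)]; exact hx.not_ge
  have hxa : x ≤ (a : ℝ) ^ (k + 2) := Nat.find_spec hex
  have hthreshold : ∀ n : ℕ, x ≤ (n : ℝ) ^ (k + 2) ↔ a ≤ n := fun n => by
    rw [Nat.find_le_iff]
    refine ⟨fun h => ⟨n, le_rfl, h⟩, fun ⟨l, hl, h⟩ => h.trans ?_⟩
    gcongr
  simp_rw [hthreshold]
  rw [← (add_left_injective a).tsum_eq]
  · simp only [le_add_iff_nonneg_left, zero_le, if_true]
    have h23 : 1 / (a : ℝ) ^ (k + 1) ≤ x ^ (-(2 : ℝ) / 3) := by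
      rw [neg_div, Real.rpow_neg hx.le, one_div]
      gcongr
      exact rpow_two_div_three_le_pow hx.le (by exact_mod_cast ha) (by omega) hxa
    calc ∑' i : ℕ, 1 / ((i + a : ℕ) : ℝ) ^ (k + 2)
        ≤ 1 / (a : ℝ) ^ (k + 2) + 1 / (a : ℝ) ^ (k + 1) / (k + 1) :=
          tsum_one_div_nat_add_pow_le ha k
      _ ≤ 1 / x + x ^ (-(2 : ℝ) / 3) / ((k + 2 : ℕ) - 1) := by
        push_cast
        rw [show (k : ℝ) + 2 - 1 = k + 1 by ring]
        gcongr
  · intro n hn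
    have han : a ≤ n := by by_contra h; simp [h] at hn
    exact ⟨n - a, Nat.sub_add_cancel han⟩

theorem tsum_primes_of_le_pow_le {x : ℝ} (hx : 0 < x) {m : ℕ} (hm : 3 ≤ m) :
    ∑' p : Nat.Primes, (if x ≤ ((p : ℕ) : ℝ) ^ m then 1 / ((m : ℝ) * ((p : ℕ) : ℝ) ^ m) else 0)
      ≤ 1 / x + 1 / ((m : ℝ) * ((m : ℝ) - 1)) * x ^ (-(2 : ℝ) / 3) := by
  set f : ℕ → ℝ := fun n => if x ≤ (n : ℝ) ^ m then 1 / (n : ℝ) ^ m else 0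
  have hf0 : ∀ n, 0 ≤ f n := fun n => by simp only [f]; split_ifs <;> positivity
  have hf : Summable f :=
    (Real.summable_one_div_nat_pow.mpr (by omega : 1 < m)).of_nonneg_of_le hf0 fun n => by
      simp only [f]; split_ifs <;> simp
  have hm1 : (1 : ℝ) ≤ m := by exact_mod_cast (by omega : 1 ≤ m)
  have hm_sub_one : (m : ℝ) - 1 ≠ 0 := by
    have : (3 : ℝ) ≤ m := by exact_mod_cast hm
    linarith
  calc _ = 1 / m * ∑' p : Nat.Primes, f p := by
        rw [← tsum_mul_left]
        congr! 1 with p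
        simp only [f, mul_ite, mul_zero, one_div_mul_one_div]
    _ ≤ 1 / m * ∑' n, f n := by gcongr; exact hf.tsum_subtype_le f {p | p.Prime} hf0
    _ ≤ 1 / m * (1 / x + x ^ (-(2 : ℝ) / 3) / (m - 1)) := by
        gcongr; exact tsum_one_div_pow_of_le_pow_le hx hm
    _ = 1 / m * (1 / x) + 1 / ((m : ℝ) * ((m : ℝ) - 1)) * x ^ (-(2 : ℝ) / 3) := by
        field_simp
    _ ≤ 1 / x + 1 / ((m : ℝ) * ((m : ℝ) - 1)) * x ^ (-(2 : ℝ) / 3) := by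
        gcongr
        exact mul_le_of_le_one_left (by positivity) (div_le_one_of_le₀ hm1 (by positivity))

theorem sum_Icc_three_one_div_mul_sub_one_le (N : ℕ) :
    ∑ m ∈ Icc 3 N, 1 / ((m : ℝ) * ((m : ℝ) - 1)) ≤ 1 / 2 := by
  suffices h : ∀ n : ℕ, 2 ≤ n → ∑ m ∈ Icc 3 n, 1 / ((m : ℝ) * ((m : ℝ) - 1)) ≤ 1 / 2 - 1 / n by
    rcases le_or_gt 2 N with hN | hN
    · linarith [h N hN, (by positivity : (0 : ℝ) ≤ 1 / N)]
    · simp [Icc_eq_empty_of_lt (by omega : N < 3)]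
  intro n hn
  induction n, hn using Nat.le_induction with
  | base => norm_num
  | succ k hk ih =>
    have hk0 : (k : ℝ) ≠ 0 := by exact_mod_cast (by omega : k ≠ 0)
    have htelescope :
        1 / (((k + 1 : ℕ) : ℝ) * ((k + 1 : ℕ) - 1)) = 1 / (k : ℝ) - 1 / (k + 1) := by
      push_cast
      rw [add_sub_cancel_right]
      field_simp
      ring
    rw [sum_Icc_succ_top (by omega), htelescope]
    push_cast
    linarith

theorem middle_prime_power_sum_bound (x : ℝ) (hx : 1 < x) :
    (∑ m ∈ Finset.Icc 3 ⌊Real.log x⌋₊,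
        ∑' p : Nat.Primes,
          if x ≤ ((p : ℕ) : ℝ) ^ m then 1 / ((m : ℝ) * ((p : ℕ) : ℝ) ^ m) else 0)
      ≤ Real.log x / x + (Real.pi ^ 2 / 6 - 1) * x ^ (-(2 : ℝ) / 3) := by
  set N := ⌊Real.log x⌋₊
  have hcard : (#(Icc 3 N) : ℝ) ≤ Real.log x :=
    calc (#(Icc 3 N) : ℝ) ≤ N := by simp only [Nat.card_Icc]; exact_mod_cast (by omega)
      _ ≤ Real.log x := Nat.floor_le (Real.log_nonneg hx.le)
  calc _ ≤ ∑ m ∈ Icc 3 N, (1 / x + 1 / ((m : ℝ) * ((m : ℝ) - 1)) * x ^ (-(2 : ℝ) / 3)) :=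
        sum_le_sum fun m hm => tsum_primes_of_le_pow_le (by linarith) (mem_Icc.mp hm).1
    _ = #(Icc 3 N) * (1 / x) +
          (∑ m ∈ Icc 3 N, 1 / ((m : ℝ) * ((m : ℝ) - 1))) * x ^ (-(2 : ℝ) / 3) := by
        rw [sum_add_distrib, sum_const, nsmul_eq_mul, ← sum_mul]
    _ ≤ Real.log x * (1 / x) + (Real.pi ^ 2 / 6 - 1) * x ^ (-(2 : ℝ) / 3) := by
        gcongr
        exact (sum_Icc_three_one_div_mul_sub_one_le N).trans (by nlinarith [Real.pi_gt_three])
    _ = _ := by rw [mul_one_div]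
end

section
/- For every real x > 1, the improper integral ∫₁^∞ ( x^{1−r}/(1−r) − ζ'(r)/ζ(r) ) dr, understood as lim_{δ→0⁺} ∫_{1+δ}^∞ ( x^{1−r}/(1−r) − ζ'(r)/ζ(r) ) dr, exists and equals log log x + C₀. -/
/-!
Substituting `t = (r - 1) log x` turns the first part of the integral into `-E₁(δ log x)`, where
`E₁(a) = ∫_a^∞ e^{-t}/t dt`, and the second part is `-log ζ(1 + δ)`, because `log ζ` is an
antiderivative of `ζ'/ζ` on `(1, ∞)` that vanishes at infinity. Integrating by parts and using
`∫_0^∞ e^{-t} log t dt = Γ'(1) = -γ` gives `E₁(a) = -log a - γ + o(1)` as `a → 0⁺`, while the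
simple pole of `ζ` at `1` gives `log ζ(1 + δ) = -log δ + o(1)`. The two `log δ` cancel, leaving
`log log x + γ`.
-/

open MeasureTheory Set Filter Topology

section IoiIntegral

variable {E : Type*} [NormedAddCommGroup E]

theorem integrableOn_Ioi_comp_add_right_iff (g : ℝ → E) (a c : ℝ) :
    IntegrableOn (fun x => g (x + c)) (Ioi a) ↔ IntegrableOn g (Ioi (a + c)) := by
  simpa [Function.comp_def] using (measurePreserving_add_right volume c).integrableOn_comp_preimage
    (measurableEmbedding_addRight c) (f := g) (s := Ioi (a + c))

variable [NormedSpace ℝ E]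

theorem integral_comp_add_right_Ioi (g : ℝ → E) (a c : ℝ) :
    ∫ x in Ioi a, g (x + c) = ∫ x in Ioi (a + c), g x := by
  simpa using (measurePreserving_add_right volume c).setIntegral_preimage_emb
    (measurableEmbedding_addRight c) g (Ioi (a + c))

theorem tendsto_setIntegral_Ioi_nhdsGT {f : ℝ → E} {a : ℝ} (hf : IntegrableOn f (Ioi a)) :
    Tendsto (fun b => ∫ t in Ioi b, f t) (𝓝[>] a) (𝓝 (∫ t in Ioi a, f t)) := by
  simp_rw [← integral_indicator measurableSet_Ioi]
  refine tendsto_integral_filter_of_dominated_convergence (‖(Ioi a).indicator f ·‖) ?_ ?_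
    (hf.integrable_indicator measurableSet_Ioi).norm ?_
  · filter_upwards [self_mem_nhdsWithin] with b hb
    exact ((hf.mono_set (Ioi_subset_Ioi (le_of_lt hb))).integrable_indicator
      measurableSet_Ioi).aestronglyMeasurable
  · filter_upwards [self_mem_nhdsWithin] with b (hb : a < b)
    refine Eventually.of_forall fun t => ?_
    by_cases ht : t ∈ Ioi b
    · rw [indicator_of_mem ht, indicator_of_mem (mem_Ioi.2 (hb.trans ht))]
    · rw [indicator_of_notMem ht, norm_zero]
      exact norm_nonneg _
  · refine Eventually.of_forall fun t => ?_
    by_cases ht : t ∈ Ioi a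
    · rw [indicator_of_mem ht]
      refine tendsto_const_nhds.congr' ?_
      filter_upwards [Ioo_mem_nhdsGT ht] with b hb
      exact (indicator_of_mem (mem_Ioi.2 hb.2) f).symm
    · rw [indicator_of_notMem ht]
      refine tendsto_const_nhds.congr' ?_
      filter_upwards [self_mem_nhdsWithin] with b (hb : a < b)
      exact (indicator_of_notMem (fun h => ht (hb.trans h)) f).symm

end IoiIntegral

namespace Real

theorem abs_log_le_two_mul_rpow_add {t : ℝ} (ht : 0 < t) :
    |log t| ≤ 2 * (t ^ (1 / 2 : ℝ) + t ^ (-(1 / 2) : ℝ)) := by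
  have hpos : log t ≤ 2 * t ^ (1 / 2 : ℝ) := by
    simpa [div_eq_mul_inv, mul_comm] using log_le_rpow_div ht.le (ε := 1 / 2) (by norm_num)
  have hneg : -log t ≤ 2 * t ^ (-(1 / 2) : ℝ) := by
    simpa [div_eq_mul_inv, mul_comm, log_inv, inv_rpow ht.le, rpow_neg ht.le] using
      log_le_rpow_div (inv_pos.2 ht).le (ε := 1 / 2) (by norm_num)
  have h1 := rpow_pos_of_pos ht (1 / 2 : ℝ)
  have h2 := rpow_pos_of_pos ht (-(1 / 2) : ℝ)
  rw [abs_le]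
  constructor <;> linarith

theorem integrableOn_exp_neg_mul_log : IntegrableOn (fun t => exp (-t) * log t) (Ioi 0) := by
  have hdom : IntegrableOn
      (fun t => 2 * (exp (-t) * t ^ ((3 / 2 : ℝ) - 1) + exp (-t) * t ^ ((1 / 2 : ℝ) - 1)))
      (Ioi 0) :=
    ((GammaIntegral_convergent (by norm_num)).add
      (GammaIntegral_convergent (by norm_num))).const_mul 2
  refine hdom.mono' (by fun_prop : Measurable fun t => exp (-t) * log t).aestronglyMeasurable ?_
  filter_upwards [ae_restrict_mem measurableSet_Ioi] with t (ht : 0 < t)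
  rw [norm_mul, norm_of_nonneg (exp_pos _).le, norm_eq_abs]
  calc exp (-t) * |log t| ≤ exp (-t) * (2 * (t ^ (1 / 2 : ℝ) + t ^ (-(1 / 2) : ℝ))) :=
        mul_le_mul_of_nonneg_left (abs_log_le_two_mul_rpow_add ht) (exp_pos _).le
    _ = _ := by norm_num; ring

theorem integral_exp_neg_mul_log : ∫ t in Ioi 0, exp (-t) * log t = -eulerMascheroniConstant := by
  have hGamma : Complex.Gamma =ᶠ[𝓝 1] Complex.GammaIntegral := by
    filter_upwards [Complex.continuous_re.isOpen_preimage _ isOpen_Ioi |>.mem_nhds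
      (show (1 : ℂ).re ∈ Ioi 0 by norm_num)] with s hs
    exact Complex.Gamma_eq_integral hs
  have hderiv := ((Complex.hasDerivAt_GammaIntegral (s := 1) (by norm_num)).congr_of_eventuallyEq
    hGamma).unique Complex.hasDerivAt_Gamma_one
  rw [← Complex.ofReal_inj, ← integral_complex_ofReal, Complex.ofReal_neg, ← hderiv]
  refine setIntegral_congr_fun measurableSet_Ioi fun t _ => ?_
  push_cast
  simp [mul_comm]

theorem tendsto_exp_neg_mul_log_atTop : Tendsto (fun t => exp (-t) * log t) atTop (𝓝 0) := by
  have := (isLittleO_log_id_atTop.trans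
    (by simpa [Function.id_def] using isLittleO_pow_exp_atTop (n := 1))).tendsto_div_nhds_zero
  simpa [exp_neg, div_eq_inv_mul] using this

theorem tendsto_one_sub_exp_neg_mul_log_nhdsGT_zero :
    Tendsto (fun a => (1 - exp (-a)) * log a) (𝓝[>] 0) (𝓝 0) := by
  have hmul : Tendsto (fun a => a * log a) (𝓝[>] 0) (𝓝 0) := by
    simpa using continuous_mul_log.tendsto 0 |>.mono_left nhdsWithin_le_nhds
  refine squeeze_zero_norm' ?_ (by simpa using hmul.norm)
  filter_upwards [self_mem_nhdsWithin] with a (ha : 0 < a)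
  rw [norm_mul, norm_of_nonneg (sub_nonneg.2 (exp_le_one_iff.2 (by linarith))), norm_eq_abs,
    abs_of_pos ha]
  gcongr
  linarith [add_one_le_exp (-a)]

noncomputable def expIntegralE1 (a : ℝ) : ℝ := ∫ t in Ioi a, exp (-t) / t

theorem integrableOn_exp_neg_div_self {a : ℝ} (ha : 0 < a) :
    IntegrableOn (fun t => exp (-t) / t) (Ioi a) := by
  refine ((exp_neg_integrableOn_Ioi a one_pos).const_mul a⁻¹).mono'
    (by fun_prop : Measurable fun t => exp (-t) / t).aestronglyMeasurable ?_
  filter_upwards [ae_restrict_mem measurableSet_Ioi] with t (ht : a < t)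
  rw [norm_div, norm_of_nonneg (exp_pos _).le, norm_of_nonneg (ha.trans ht).le, neg_one_mul,
    div_eq_inv_mul]
  gcongr

theorem expIntegralE1_eq_integral_exp_neg_mul_log_sub {a : ℝ} (ha : 0 < a) :
    expIntegralE1 a = (∫ t in Ioi a, exp (-t) * log t) - exp (-a) * log a := by
  have hderiv : ∀ t ∈ Ici a, HasDerivAt (fun t => -(exp (-t) * log t))
      (exp (-t) * log t - exp (-t) / t) t := fun t ht => by
    have := ((hasDerivAt_neg t).exp.fun_mul (hasDerivAt_log (ha.trans_le ht).ne')).fun_neg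
    exact this.congr_deriv (by ring)
  have hibp := integral_Ioi_of_hasDerivAt_of_tendsto' hderiv
    ((integrableOn_exp_neg_mul_log.mono_set (Ioi_subset_Ioi ha.le)).sub
      (integrableOn_exp_neg_div_self ha)) (by simpa using tendsto_exp_neg_mul_log_atTop.neg)
  rw [integral_sub (integrableOn_exp_neg_mul_log.mono_set (Ioi_subset_Ioi ha.le))
    (integrableOn_exp_neg_div_self ha)] at hibp
  rw [expIntegralE1]
  linarith

theorem tendsto_expIntegralE1_add_log_nhdsGT_zero :
    Tendsto (fun a => expIntegralE1 a + log a) (𝓝[>] 0) (𝓝 (-eulerMascheroniConstant)) := by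
  have := (tendsto_setIntegral_Ioi_nhdsGT integrableOn_exp_neg_mul_log).add
    tendsto_one_sub_exp_neg_mul_log_nhdsGT_zero
  rw [integral_exp_neg_mul_log, add_zero] at this
  refine this.congr' ?_
  filter_upwards [self_mem_nhdsWithin] with a (ha : 0 < a)
  rw [expIntegralE1_eq_integral_exp_neg_mul_log_sub ha]
  ring

theorem rpow_one_sub_div_one_sub_add_one {x : ℝ} (hx : 1 < x) (s : ℝ) :
    x ^ (1 - (s + 1)) / (1 - (s + 1)) = -log x * (exp (-(log x * s)) / (log x * s)) := by
  have hL : log x ≠ 0 := (log_pos hx).ne'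
  rw [rpow_def_of_pos (by linarith), show 1 - (s + 1) = -s by ring]
  rcases eq_or_ne s 0 with rfl | hs
  · simp
  · field_simp

theorem integrableOn_rpow_one_sub_div_one_sub {x δ : ℝ} (hx : 1 < x) (hδ : 0 < δ) :
    IntegrableOn (fun r => x ^ (1 - r) / (1 - r)) (Ioi (1 + δ)) := by
  rw [add_comm, ← integrableOn_Ioi_comp_add_right_iff]
  simp_rw [rpow_one_sub_div_one_sub_add_one hx]
  exact (((integrableOn_Ioi_comp_mul_left_iff _ δ (log_pos hx)).2
    (integrableOn_exp_neg_div_self (mul_pos (log_pos hx) hδ))).const_mul _)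

theorem integral_rpow_one_sub_div_one_sub {x δ : ℝ} (hx : 1 < x) :
    ∫ r in Ioi (1 + δ), x ^ (1 - r) / (1 - r) = -expIntegralE1 (log x * δ) := by
  rw [add_comm, ← integral_comp_add_right_Ioi]
  simp_rw [rpow_one_sub_div_one_sub_add_one hx]
  rw [integral_const_mul, integral_comp_mul_left_Ioi (fun t => exp (-t) / t) δ (log_pos hx),
    expIntegralE1, smul_eq_mul, ← mul_assoc, neg_mul, mul_inv_cancel₀ (log_pos hx).ne']
  ring

end Real

open Real

section RiemannZeta

open scoped ComplexOrder

theorem logDeriv_riemannZeta_ofReal_nonpos {r : ℝ} (hr : 1 < r) :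
    deriv riemannZeta r / riemannZeta r ≤ 0 := by
  rw [← neg_nonneg, ← neg_div, ← ArithmeticFunction.LSeries_vonMangoldt_eq_deriv_riemannZeta_div
    (by simpa using hr)]
  exact tsum_nonneg fun n => LSeries.term_nonneg
    (by simp [ArithmeticFunction.vonMangoldt_nonneg]) r

theorem hasDerivAt_log_riemannZeta_ofReal {r : ℝ} (hr : 1 < r) :
    HasDerivAt (fun s => Complex.log (riemannZeta s)) (deriv riemannZeta r / riemannZeta r) r := by
  have hζ : HasDerivAt riemannZeta (deriv riemannZeta r) r :=
    (differentiableAt_riemannZeta (by exact_mod_cast hr.ne')).hasDerivAt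
  have hslit : riemannZeta r ∈ Complex.slitPlane :=
    Complex.mem_slitPlane_iff_not_le_zero.2 (riemannZeta_pos_of_one_lt hr).not_ge
  exact ((Complex.hasDerivAt_log hslit).comp (r : ℂ) hζ).congr_deriv (by rw [div_eq_inv_mul])

theorem tendsto_log_riemannZeta_ofReal_atTop :
    Tendsto (fun x : ℝ => Complex.log (riemannZeta x)) atTop (𝓝 0) := by
  have hL : Tendsto (fun x : ℝ => LSeries 1 x) atTop (𝓝 1) := by
    simpa using LSeries.tendsto_atTop (f := 1)
      (by rw [LSeries.abscissaOfAbsConv_one]; exact EReal.coe_lt_top 1)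
  have hζ : Tendsto (fun x : ℝ => riemannZeta x) atTop (𝓝 1) := by
    refine hL.congr' ?_
    filter_upwards [eventually_gt_atTop 1] with x hx
    exact LSeries_one_eq_riemannZeta (by simpa using hx)
  simpa [Function.comp_def] using ((continuousAt_clog Complex.one_mem_slitPlane).tendsto).comp hζ

/-- `ζ'/ζ` is real and nonpositive on `(1, ∞)`, so `-Re log ζ` is an antiderivative with nonnegative
derivative and a limit at infinity. -/
theorem integrableOn_logDeriv_riemannZeta {a : ℝ} (ha : 1 < a) :
    IntegrableOn (fun r : ℝ => deriv riemannZeta r / riemannZeta r) (Ioi a) := by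
  have hre : IntegrableOn (fun r : ℝ => -(deriv riemannZeta r / riemannZeta r).re) (Ioi a) :=
    integrableOn_Ioi_deriv_of_nonneg'
      (fun r hr => ((hasDerivAt_log_riemannZeta_ofReal (ha.trans_le hr)).real_of_complex).fun_neg)
      (fun r hr => neg_nonneg.2 (logDeriv_riemannZeta_ofReal_nonpos (ha.trans hr)).1)
      (by simpa using
        ((Complex.continuous_re.tendsto 0).comp tendsto_log_riemannZeta_ofReal_atTop).neg)
  refine Integrable.congr (hre.neg.ofReal (𝕜 := ℂ)) ?_
  filter_upwards [ae_restrict_mem measurableSet_Ioi] with r hr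
  have him := (logDeriv_riemannZeta_ofReal_nonpos (ha.trans hr)).2
  exact Complex.ext (by simp) (by simpa using him.symm)

theorem integral_logDeriv_riemannZeta {a : ℝ} (ha : 1 < a) :
    ∫ r in Ioi a, deriv riemannZeta r / riemannZeta r = -Complex.log (riemannZeta a) := by
  simpa using integral_Ioi_of_hasDerivAt_of_tendsto'
    (fun r hr => (hasDerivAt_log_riemannZeta_ofReal (ha.trans_le hr)).comp_ofReal)
    (integrableOn_logDeriv_riemannZeta ha) tendsto_log_riemannZeta_ofReal_atTop

theorem log_riemannZeta_ofReal {r : ℝ} (hr : 1 < r) :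
    Complex.log (riemannZeta r) = Real.log (riemannZeta r).re := by
  have hreal : ((riemannZeta r).re : ℂ) = riemannZeta r :=
    Complex.ext (by simp) (by simp [riemannZeta_im_eq_zero_of_one_lt hr])
  rw [Complex.ofReal_log (riemannZeta_re_pos_of_one_lt hr).le, hreal]

theorem tendsto_log_riemannZeta_one_add_add_log_nhdsGT_zero :
    Tendsto (fun δ : ℝ => Real.log (riemannZeta (1 + δ : ℝ)).re + Real.log δ) (𝓝[>] 0) (𝓝 0) := by
  have hshift : Tendsto (fun δ : ℝ => 1 + δ) (𝓝[>] 0) (𝓝[>] 1) := by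
    have h := (Filter.map_add_left_nhdsGT (c := (1 : ℝ)) (a := 0)).le
    rwa [add_zero] at h
  simpa only [Function.comp_def, add_sub_cancel_left] using
    ((Asymptotics.isLittleO_one_iff ℝ).1 log_riemannZeta_add_log_sub_isLittleO_ofReal).comp hshift

end RiemannZeta

theorem integral_cpow_one_sub_div_sub_logDeriv_riemannZeta {x δ : ℝ} (hx : 1 < x) (hδ : 0 < δ) :
    ∫ r in Ioi (1 + δ), ((x : ℂ) ^ (1 - (r : ℂ)) / (1 - (r : ℂ))
        - deriv riemannZeta r / riemannZeta r)
      = ((-expIntegralE1 (log x * δ) + Real.log (riemannZeta (1 + δ : ℝ)).re : ℝ) : ℂ) := by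
  have h1δ : 1 < 1 + δ := by linarith
  have hcast (r : ℝ) :
      (x : ℂ) ^ (1 - (r : ℂ)) / (1 - (r : ℂ)) = ((x ^ (1 - r) / (1 - r) : ℝ) : ℂ) := by
    rw [Complex.ofReal_div, Complex.ofReal_cpow (by linarith)]
    push_cast
    rfl
  simp_rw [hcast]
  rw [integral_sub ?_ (integrableOn_logDeriv_riemannZeta h1δ), integral_complex_ofReal,
    integral_rpow_one_sub_div_one_sub hx, integral_logDeriv_riemannZeta h1δ,
    log_riemannZeta_ofReal h1δ]
  · push_cast
    ring
  · exact (integrableOn_rpow_one_sub_div_one_sub hx hδ).ofReal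

theorem integral_main_term (x : ℝ) (hx : 1 < x) :
    Filter.Tendsto
      (fun δ : ℝ =>
        ∫ r in Set.Ioi (1 + δ),
          ((x : ℂ) ^ (1 - (r : ℂ)) / (1 - (r : ℂ))
            - deriv riemannZeta (r : ℂ) / riemannZeta (r : ℂ)))
      (nhdsWithin 0 (Set.Ioi 0))
      (nhds ((Real.log (Real.log x) : ℂ) + (Real.eulerMascheroniConstant : ℂ))) := by
  have hL : 0 < log x := log_pos hx
  have hscale : Tendsto (log x * ·) (𝓝[>] 0) (𝓝[>] 0) :=
    tendsto_iff_comap.2 (comap_mulLeft_nhdsGT_zero hL).ge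
  have hreal : Tendsto
      (fun δ => -expIntegralE1 (log x * δ) + Real.log (riemannZeta (1 + δ : ℝ)).re) (𝓝[>] 0)
      (𝓝 (log (log x) + eulerMascheroniConstant)) := by
    have := ((tendsto_expIntegralE1_add_log_nhdsGT_zero.comp hscale).neg.add
      tendsto_log_riemannZeta_one_add_add_log_nhdsGT_zero).const_add (log (log x))
    rw [neg_neg, add_zero] at this
    refine this.congr' ?_
    filter_upwards [self_mem_nhdsWithin] with δ (hδ : 0 < δ)
    rw [Function.comp_apply, log_mul hL.ne' hδ.ne']
    ring
  have hcomplex := (Complex.continuous_ofReal.tendsto _).comp hreal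
  rw [Complex.ofReal_add] at hcomplex
  refine hcomplex.congr' ?_
  filter_upwards [self_mem_nhdsWithin] with δ (hδ : 0 < δ)
  exact (integral_cpow_one_sub_div_sub_logDeriv_riemannZeta hx hδ).symm
end
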